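/- (Hopf's Lemma for ℒ.) Let 𝒱 ⊂ ℝ^{2n+2} satisfy the interior gauge-ball condition at P₀ ∈ ∂𝒱, i.e. there exist z₀ ∈ 𝒱 and R > 0 with 𝓑(z₀,R) ⊂ 𝒱 and P₀ ∈ ∂𝓑(z₀,R). Let U ∈ C²(𝒱) ∩ C¹(closure of 𝒱) satisfy −ℒU ≥ c₁(z)U in 𝒱 with c₁ ∈ L^∞(𝒱). Suppose U(z) > U(P₀) = 0 for every z ∈ 𝒱. Then lim_{s→0⁺} (U(P₀) − U(P₀ − sν))/s < 0, where ν is the outward Euclidean unit normal to the interior gauge ball 𝓑(z₀,R) at P₀. -/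

import Mathlib

open Real Filter Set Topology MeasureTheory

noncomputable section

/-- Points of the extended space ℝ^{2n+2}: `z = (x, y, t, λ)`. -/
abbrev Pt (n : ℕ) : Type := (Fin n → ℝ) × (Fin n → ℝ) × ℝ × ℝ

/-- Points of the Heisenberg group ℍⁿ = ℝ^{2n+1}: `ξ = (x, y, t)`. -/
abbrev HPt (n : ℕ) : Type := (Fin n → ℝ) × (Fin n → ℝ) × ℝ

namespace Heis

variable {n : ℕ}

/-- Partial derivative `∂/∂x_j`. -/
def pX (j : Fin n) (U : Pt n → ℝ) (z : Pt n) : ℝ :=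
  deriv (fun s => U (Function.update z.1 j s, z.2.1, z.2.2.1, z.2.2.2)) (z.1 j)

/-- Partial derivative `∂/∂y_j`. -/
def pY (j : Fin n) (U : Pt n → ℝ) (z : Pt n) : ℝ :=
  deriv (fun s => U (z.1, Function.update z.2.1 j s, z.2.2.1, z.2.2.2)) (z.2.1 j)

/-- Partial derivative `∂/∂t`. -/
def pT (U : Pt n → ℝ) (z : Pt n) : ℝ :=
  deriv (fun s => U (z.1, z.2.1, s, z.2.2.2)) z.2.2.1

/-- Partial derivative `∂/∂λ`. -/
def pL (U : Pt n → ℝ) (z : Pt n) : ℝ :=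
  deriv (fun s => U (z.1, z.2.1, z.2.2.1, s)) z.2.2.2

/-- The Heisenberg sub-Laplacian `Δ_ℍ`, acting in the variables `(x, y, t)`. -/
def subLap (U : Pt n → ℝ) (z : Pt n) : ℝ :=
  (∑ j, (pX j (pX j U) z + pY j (pY j U) z
      + 4 * z.2.1 j * pX j (pT U) z - 4 * z.1 j * pY j (pT U) z))
    + 4 * ((∑ j, z.1 j ^ 2) + (∑ j, z.2.1 j ^ 2)) * pT (pT U) z

/-- The extension operator `ℒ U = ∂²U/∂λ² + 4λ² ∂²U/∂t² + Δ_ℍ U`. -/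
def Lop (U : Pt n → ℝ) (z : Pt n) : ℝ :=
  pL (pL U) z + 4 * z.2.2.2 ^ 2 * pT (pT U) z + subLap U z

/-- `r² = |x|² + |y|² + λ²`. -/
def rSq (z : Pt n) : ℝ := (∑ j, z.1 j ^ 2) + (∑ j, z.2.1 j ^ 2) + z.2.2.2 ^ 2

/-- `r = (|x|² + |y|² + λ²)^{1/2}`. -/
def rr (z : Pt n) : ℝ := Real.sqrt (rSq z)

/-- `r₀ = (|x|² + |y|²)^{1/2}`. -/
def r0 (z : Pt n) : ℝ := Real.sqrt ((∑ j, z.1 j ^ 2) + (∑ j, z.2.1 j ^ 2))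

/-- The gauge `ρ(z) = (r⁴ + t²)^{1/4}`. -/
def rho (z : Pt n) : ℝ := (rSq z ^ 2 + z.2.2.1 ^ 2) ^ ((1 : ℝ) / 4)

/-- The open half-space ℍⁿ × ℝ⁺ = {λ > 0}. -/
def halfSpace (n : ℕ) : Set (Pt n) := {z | 0 < z.2.2.2}

/-- The closed half-space {λ ≥ 0}. -/
def closedHalfSpace (n : ℕ) : Set (Pt n) := {z | 0 ≤ z.2.2.2}

/-- `U` is cylindrical: it depends only on `(r₀, t, λ)`. -/
def Cylindrical (U : Pt n → ℝ) : Prop :=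
  ∀ z w : Pt n,
    (∑ j, z.1 j ^ 2) + (∑ j, z.2.1 j ^ 2) = (∑ j, w.1 j ^ 2) + (∑ j, w.2.1 j ^ 2) →
    z.2.2.1 = w.2.2.1 → z.2.2.2 = w.2.2.2 → U z = U w

/-- The CR-inverted point `z̃`. -/
def crPt (z : Pt n) : Pt n :=
  (fun i => (z.1 i * z.2.2.1 + z.2.1 i * rSq z) / rho z ^ 4,
   fun i => (z.2.1 i * z.2.2.1 - z.1 i * rSq z) / rho z ^ 4,
   -z.2.2.1 / rho z ^ 4,
   z.2.2.2 / rho z ^ 2)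

/-- CR inversion of a function: `v(z) = ρ(z)^{-(Q-1)} U(z̃)`, with `Q - 1 = 2n + 1`. -/
def crInv (U : Pt n → ℝ) (z : Pt n) : ℝ := U (crPt z) / rho z ^ (2 * n + 1)

/-- Group law on ℝ^{2n+2}: `gmul ẑ z = ẑ ∘ z`. -/
def gmul (w z : Pt n) : Pt n :=
  (w.1 + z.1, w.2.1 + z.2.1,
   w.2.2.1 + z.2.2.1 + 2 * ∑ j, (z.1 j * w.2.1 j - z.2.1 j * w.1 j),
   w.2.2.2 + z.2.2.2)

/-- Group inverse on ℝ^{2n+2}. -/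
def ginv (z : Pt n) : Pt n := (-z.1, -z.2.1, -z.2.2.1, -z.2.2.2)

/-- Gauge distance `d(z, ẑ) = |ẑ⁻¹ ∘ z|`. -/
def gdist (z w : Pt n) : ℝ := rho (gmul (ginv w) z)

/-- Gauge ball in ℝ^{2n+2}. -/
def gBall (z₀ : Pt n) (R : ℝ) : Set (Pt n) := {z | gdist z z₀ < R}

/-- The fourth power of the gauge distance from `z₀` (a polynomial function). -/
def gaugeQuartic (z₀ z : Pt n) : ℝ :=
  rSq (gmul (ginv z₀) z) ^ 2 + (gmul (ginv z₀) z).2.2.1 ^ 2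

/-- Euclidean gradient of a function on ℝ^{2n+2}. -/
def egrad (F : Pt n → ℝ) (z : Pt n) : Pt n :=
  (fun j => pX j F z, fun j => pY j F z, pT F z, pL F z)

/-- Euclidean dot product on ℝ^{2n+2}. -/
def dotP (v w : Pt n) : ℝ :=
  (∑ j, v.1 j * w.1 j) + (∑ j, v.2.1 j * w.2.1 j) + v.2.2.1 * w.2.2.1 + v.2.2.2 * w.2.2.2

/-- Euclidean norm on ℝ^{2n+2}. -/
def enormP (v : Pt n) : ℝ := Real.sqrt (dotP v v)

/-- Outward Euclidean unit normal to the gauge ball centered at `z₀`, at a boundary point `P`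
(the normalized Euclidean gradient of the fourth power of the gauge distance). -/
def outerNormal (z₀ P : Pt n) : Pt n :=
  (enormP (egrad (gaugeQuartic z₀) P))⁻¹ • egrad (gaugeQuartic z₀) P

/-- Euclidean directional derivative of `U` at `z` along the vector `v`. -/
def dirDeriv (U : Pt n → ℝ) (z v : Pt n) : ℝ :=
  (∑ j, v.1 j * pX j U z) + (∑ j, v.2.1 j * pY j U z)
    + v.2.2.1 * pT U z + v.2.2.2 * pL U z

/-! Heisenberg group ℝ^{2n+1}. -/

/-- Partial derivative `∂/∂x_j` on ℝ^{2n+1}. -/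
def pXh (j : Fin n) (F : HPt n → ℝ) (ξ : HPt n) : ℝ :=
  deriv (fun s => F (Function.update ξ.1 j s, ξ.2.1, ξ.2.2)) (ξ.1 j)

/-- Partial derivative `∂/∂y_j` on ℝ^{2n+1}. -/
def pYh (j : Fin n) (F : HPt n → ℝ) (ξ : HPt n) : ℝ :=
  deriv (fun s => F (ξ.1, Function.update ξ.2.1 j s, ξ.2.2)) (ξ.2.1 j)

/-- Partial derivative `∂/∂t` on ℝ^{2n+1}. -/
def pTh (F : HPt n → ℝ) (ξ : HPt n) : ℝ :=
  deriv (fun s => F (ξ.1, ξ.2.1, s)) ξ.2.2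

/-- Heisenberg group law: `hmul ξ̂ ξ = ξ̂ ∘ ξ`. -/
def hmul (w z : HPt n) : HPt n :=
  (w.1 + z.1, w.2.1 + z.2.1,
   w.2.2 + z.2.2 + 2 * ∑ j, (z.1 j * w.2.1 j - z.2.1 j * w.1 j))

/-- Heisenberg group inverse. -/
def hinv (z : HPt n) : HPt n := (-z.1, -z.2.1, -z.2.2)

/-- `|x|² + |y|²` on ℝ^{2n+1}. -/
def hrSq (ξ : HPt n) : ℝ := (∑ j, ξ.1 j ^ 2) + (∑ j, ξ.2.1 j ^ 2)

/-- Heisenberg gauge norm `|ξ|_ℍ = [(|x|²+|y|²)² + t²]^{1/4}`. -/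
def hnorm (ξ : HPt n) : ℝ := (hrSq ξ ^ 2 + ξ.2.2 ^ 2) ^ ((1 : ℝ) / 4)

/-- Heisenberg gauge distance. -/
def hdist (ξ ζ : HPt n) : ℝ := hnorm (hmul (hinv ζ) ξ)

/-- Heisenberg gauge ball. -/
def hBall (ξ₀ : HPt n) (R : ℝ) : Set (HPt n) := {ξ | hdist ξ ξ₀ < R}

/-- Fourth power of the Heisenberg gauge distance from `ξ₀`. -/
def hGaugeQuartic (ξ₀ ξ : HPt n) : ℝ :=
  hrSq (hmul (hinv ξ₀) ξ) ^ 2 + (hmul (hinv ξ₀) ξ).2.2 ^ 2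

/-- Euclidean gradient on ℝ^{2n+1}. -/
def hgrad (F : HPt n → ℝ) (ξ : HPt n) : HPt n :=
  (fun j => pXh j F ξ, fun j => pYh j F ξ, pTh F ξ)

/-- Euclidean dot product on ℝ^{2n+1}. -/
def hdot (v w : HPt n) : ℝ :=
  (∑ j, v.1 j * w.1 j) + (∑ j, v.2.1 j * w.2.1 j) + v.2.2 * w.2.2

/-- Euclidean norm on ℝ^{2n+1}. -/
def hnormE (v : HPt n) : ℝ := Real.sqrt (hdot v v)

/-- Outward Euclidean unit normal to the Heisenberg gauge ball centered at `ξ₀`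
at a boundary point `P`. -/
def hOuterNormal (ξ₀ P : HPt n) : HPt n :=
  (hnormE (hgrad (hGaugeQuartic ξ₀) P))⁻¹ • hgrad (hGaugeQuartic ξ₀) P

/-- The cylinder `𝒞 = Ω × (0, ∞)` seen inside ℝ^{2n+2}. -/
def cylSet (Ω : Set (HPt n)) : Set (Pt n) :=
  {z | (z.1, z.2.1, z.2.2.1) ∈ Ω ∧ 0 < z.2.2.2}

/-- The bottom of the cylinder, `Ω × {0}`. -/
def botSet (Ω : Set (HPt n)) : Set (Pt n) :=
  {z | (z.1, z.2.1, z.2.2.1) ∈ Ω ∧ z.2.2.2 = 0}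

/-- `h₀(z) = ρ(z + β₂ e_{2n+2})^{-β₁}`. -/
def hZero (β₁ β₂ : ℝ) (z : Pt n) : ℝ :=
  rho (z.1, z.2.1, z.2.2.1, z.2.2.2 + β₂) ^ (-β₁)

/-- The moving-plane region `Σ_μ = {z ∈ ℍⁿ × ℝ⁺ : t < μ}`. -/
def SigmaSet (n : ℕ) (μ : ℝ) : Set (Pt n) := {z | 0 < z.2.2.2 ∧ z.2.2.1 < μ}

/-- The `H`-reflection `z_μ = (y, x, 2μ - t, λ)`. -/
def hRefl (μ : ℝ) (z : Pt n) : Pt n := (z.2.1, z.1, 2 * μ - z.2.2.1, z.2.2.2)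

/-- The reflected origin `e_μ = (0, 0, 2μ, 0)`. -/
def eMu (n : ℕ) (μ : ℝ) : Pt n := (0, 0, 2 * μ, 0)

/-- `W̃_μ = (w ∘ reflection - w) / h₀`. -/
def WT (w h₀ : Pt n → ℝ) (μ : ℝ) (z : Pt n) : ℝ := (w (hRefl μ z) - w z) / h₀ z

end Heis

open Heis

namespace HopfAux
open Heis

variable {n : ℕ}

/-- Basis vectors of `Pt n`. -/
def eX (j : Fin n) : Pt n := (Pi.single j 1, 0, 0, 0)
def eY (j : Fin n) : Pt n := (0, Pi.single j 1, 0, 0)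
def eT : Pt n := (0, 0, 1, 0)
def eL : Pt n := (0, 0, 0, 1)

lemma line_hasDerivAt (z v : Pt n) (c s₀ : ℝ) :
    HasDerivAt (fun s : ℝ => z + (s - c) • v) v s₀ := by
  simpa using (((hasDerivAt_id s₀).sub_const c).smul_const v).const_add z

lemma updX_eq (z : Pt n) (j : Fin n) (s : ℝ) :
    ((Function.update z.1 j s, z.2.1, z.2.2.1, z.2.2.2) : Pt n) = z + (s - z.1 j) • eX j := by
  refine Prod.ext ?_ (Prod.ext ?_ (Prod.ext ?_ ?_)) <;>
    simp [eX, Prod.add_def, Prod.smul_def]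
  · funext k
    by_cases h : k = j
    · subst h; simp
    · simp [Function.update_of_ne h, Pi.single_eq_of_ne h]

lemma updY_eq (z : Pt n) (j : Fin n) (s : ℝ) :
    ((z.1, Function.update z.2.1 j s, z.2.2.1, z.2.2.2) : Pt n) = z + (s - z.2.1 j) • eY j := by
  refine Prod.ext ?_ (Prod.ext ?_ (Prod.ext ?_ ?_)) <;>
    simp [eY, Prod.add_def, Prod.smul_def]
  · funext k
    by_cases h : k = j
    · subst h; simp
    · simp [Function.update_of_ne h, Pi.single_eq_of_ne h]

lemma updT_eq (z : Pt n) (s : ℝ) :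
    ((z.1, z.2.1, s, z.2.2.2) : Pt n) = z + (s - z.2.2.1) • eT := by
  refine Prod.ext ?_ (Prod.ext ?_ (Prod.ext ?_ ?_)) <;>
    simp [eT, Prod.add_def, Prod.smul_def]

lemma updL_eq (z : Pt n) (s : ℝ) :
    ((z.1, z.2.1, z.2.2.1, s) : Pt n) = z + (s - z.2.2.2) • eL := by
  refine Prod.ext ?_ (Prod.ext ?_ (Prod.ext ?_ ?_)) <;>
    simp [eL, Prod.add_def, Prod.smul_def]

lemma pX_eq {f : Pt n → ℝ} {z : Pt n} (j : Fin n) (hf : DifferentiableAt ℝ f z) :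
    pX j f z = fderiv ℝ f z (eX j) := by
  have h : HasDerivAt (fun s => f (z + (s - z.1 j) • eX j)) (fderiv ℝ f z (eX j)) (z.1 j) := by
    have hf' : HasFDerivAt f (fderiv ℝ f z) (z + (z.1 j - z.1 j) • eX j) := by
      simpa using hf.hasFDerivAt
    have h2 := hf'.comp_hasDerivAt (z.1 j) (line_hasDerivAt z (eX j) (z.1 j) (z.1 j))
    exact h2
  have : (fun s => f (Function.update z.1 j s, z.2.1, z.2.2.1, z.2.2.2))
      = fun s => f (z + (s - z.1 j) • eX j) := by
    funext s; rw [updX_eq]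
  rw [pX, this, h.deriv]

lemma pY_eq {f : Pt n → ℝ} {z : Pt n} (j : Fin n) (hf : DifferentiableAt ℝ f z) :
    pY j f z = fderiv ℝ f z (eY j) := by
  have h : HasDerivAt (fun s => f (z + (s - z.2.1 j) • eY j)) (fderiv ℝ f z (eY j)) (z.2.1 j) := by
    have hf' : HasFDerivAt f (fderiv ℝ f z) (z + (z.2.1 j - z.2.1 j) • eY j) := by
      simpa using hf.hasFDerivAt
    have h2 := hf'.comp_hasDerivAt (z.2.1 j) (line_hasDerivAt z (eY j) (z.2.1 j) (z.2.1 j))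
    exact h2
  have : (fun s => f (z.1, Function.update z.2.1 j s, z.2.2.1, z.2.2.2))
      = fun s => f (z + (s - z.2.1 j) • eY j) := by
    funext s; rw [updY_eq]
  rw [pY, this, h.deriv]

lemma pT_eq {f : Pt n → ℝ} {z : Pt n} (hf : DifferentiableAt ℝ f z) :
    pT f z = fderiv ℝ f z eT := by
  have h : HasDerivAt (fun s => f (z + (s - z.2.2.1) • eT)) (fderiv ℝ f z eT) z.2.2.1 := by
    have hf' : HasFDerivAt f (fderiv ℝ f z) (z + (z.2.2.1 - z.2.2.1) • eT) := by
      simpa using hf.hasFDerivAt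
    have h2 := hf'.comp_hasDerivAt z.2.2.1 (line_hasDerivAt z eT z.2.2.1 z.2.2.1)
    exact h2
  have : (fun s => f (z.1, z.2.1, s, z.2.2.2)) = fun s => f (z + (s - z.2.2.1) • eT) := by
    funext s; rw [updT_eq]
  rw [pT, this, h.deriv]

lemma pL_eq {f : Pt n → ℝ} {z : Pt n} (hf : DifferentiableAt ℝ f z) :
    pL f z = fderiv ℝ f z eL := by
  have h : HasDerivAt (fun s => f (z + (s - z.2.2.2) • eL)) (fderiv ℝ f z eL) z.2.2.2 := by
    have hf' : HasFDerivAt f (fderiv ℝ f z) (z + (z.2.2.2 - z.2.2.2) • eL) := by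
      simpa using hf.hasFDerivAt
    have h2 := hf'.comp_hasDerivAt z.2.2.2 (line_hasDerivAt z eL z.2.2.2 z.2.2.2)
    exact h2
  have : (fun s => f (z.1, z.2.1, z.2.2.1, s)) = fun s => f (z + (s - z.2.2.2) • eL) := by
    funext s; rw [updL_eq]
  rw [pL, this, h.deriv]



open Filter

variable {n : ℕ} {f : Pt n → ℝ} {z : Pt n}

/-- Iterated directional derivative. -/
def sndD (f : Pt n → ℝ) (z v w : Pt n) : ℝ := fderiv ℝ (fun p => fderiv ℝ f p w) z v

/-- Quadratic form of the second derivative. -/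
def Hq (f : Pt n → ℝ) (z v : Pt n) : ℝ := sndD f z v v

lemma contDiffAt_open (hf : ContDiffAt ℝ 2 f z) :
    ∃ O : Set (Pt n), IsOpen O ∧ z ∈ O ∧ ContDiffOn ℝ 2 f O := by
  obtain ⟨u, hu, hcd⟩ := hf.contDiffOn le_rfl (by simp)
  obtain ⟨O, hOu, hO, hzO⟩ := mem_nhds_iff.1 hu
  exact ⟨O, hO, hzO, hcd.mono hOu⟩

lemma diffAt_of_open {O : Set (Pt n)} (hO : IsOpen O) (hcd : ContDiffOn ℝ 2 f O) :
    ∀ p ∈ O, DifferentiableAt ℝ f p := fun p hp =>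
  (hcd.contDiffAt (hO.mem_nhds hp)).differentiableAt two_ne_zero

lemma diffAt_fderiv_apply (hf : ContDiffAt ℝ 2 f z) (w : Pt n) :
    DifferentiableAt ℝ (fun p => fderiv ℝ f p w) z := by
  have h1 : ContDiffAt ℝ 1 (fderiv ℝ f) z := hf.fderiv_right (by norm_num)
  exact (h1.differentiableAt one_ne_zero).clm_apply (differentiableAt_const w)

lemma sndD_eq (hf : ContDiffAt ℝ 2 f z) (v w : Pt n) :
    sndD f z v w = fderiv ℝ (fderiv ℝ f) z v w := by
  have h1 : ContDiffAt ℝ 1 (fderiv ℝ f) z := hf.fderiv_right (by norm_num)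
  have h2 : DifferentiableAt ℝ (fderiv ℝ f) z := h1.differentiableAt one_ne_zero
  have h3 := fderiv_clm_apply h2 (differentiableAt_const w)
  rw [sndD, h3]
  simp

lemma sndD_symm (hf : ContDiffAt ℝ 2 f z) (v w : Pt n) :
    sndD f z v w = sndD f z w v := by
  rw [sndD_eq hf, sndD_eq hf]
  exact (hf.isSymmSndFDerivAt (by simp [minSmoothness_of_isRCLikeNormedField])) v w

lemma Hq_expand (hf : ContDiffAt ℝ 2 f z) (a b : Pt n) (c : ℝ) :
    Hq f z (a + c • b) = sndD f z a a + 2 * c * sndD f z a b + c ^ 2 * sndD f z b b := by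
  have hsym := (hf.isSymmSndFDerivAt (by simp [minSmoothness_of_isRCLikeNormedField])) b a
  unfold Hq
  rw [sndD_eq hf, sndD_eq hf, sndD_eq hf, sndD_eq hf]
  simp only [map_add, _root_.map_smul, ContinuousLinearMap.add_apply,
    ContinuousLinearMap.coe_smul', Pi.smul_apply, smul_eq_mul]
  rw [hsym]
  ring

lemma Hq_smul (hf : ContDiffAt ℝ 2 f z) (b : Pt n) (c : ℝ) :
    Hq f z (c • b) = c ^ 2 * sndD f z b b := by
  have := Hq_expand hf 0 b c
  simpa [Hq, sndD_eq hf] using this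

/- Identification of the iterated coordinate partials with `sndD`. -/

lemma pXpX_eq (hf : ContDiffAt ℝ 2 f z) (j : Fin n) :
    pX j (pX j f) z = sndD f z (eX j) (eX j) := by
  obtain ⟨O, hO, hzO, hcd⟩ := contDiffAt_open hf
  have hev : pX j f =ᶠ[𝓝 z] fun p => fderiv ℝ f p (eX j) :=
    eventuallyEq_of_mem (hO.mem_nhds hzO) (fun p hp => pX_eq j (diffAt_of_open hO hcd p hp))
  have hda : DifferentiableAt ℝ (fun p => fderiv ℝ f p (eX j)) z := diffAt_fderiv_apply hf _
  rw [pX_eq j (hda.congr_of_eventuallyEq hev), hev.fderiv_eq]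
  rfl

lemma pYpY_eq (hf : ContDiffAt ℝ 2 f z) (j : Fin n) :
    pY j (pY j f) z = sndD f z (eY j) (eY j) := by
  obtain ⟨O, hO, hzO, hcd⟩ := contDiffAt_open hf
  have hev : pY j f =ᶠ[𝓝 z] fun p => fderiv ℝ f p (eY j) :=
    eventuallyEq_of_mem (hO.mem_nhds hzO) (fun p hp => pY_eq j (diffAt_of_open hO hcd p hp))
  have hda : DifferentiableAt ℝ (fun p => fderiv ℝ f p (eY j)) z := diffAt_fderiv_apply hf _
  rw [pY_eq j (hda.congr_of_eventuallyEq hev), hev.fderiv_eq]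
  rfl

lemma pXpT_eq (hf : ContDiffAt ℝ 2 f z) (j : Fin n) :
    pX j (pT f) z = sndD f z (eX j) eT := by
  obtain ⟨O, hO, hzO, hcd⟩ := contDiffAt_open hf
  have hev : pT f =ᶠ[𝓝 z] fun p => fderiv ℝ f p eT :=
    eventuallyEq_of_mem (hO.mem_nhds hzO) (fun p hp => pT_eq (diffAt_of_open hO hcd p hp))
  have hda : DifferentiableAt ℝ (fun p => fderiv ℝ f p eT) z := diffAt_fderiv_apply hf _
  rw [pX_eq j (hda.congr_of_eventuallyEq hev), hev.fderiv_eq]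
  rfl

lemma pYpT_eq (hf : ContDiffAt ℝ 2 f z) (j : Fin n) :
    pY j (pT f) z = sndD f z (eY j) eT := by
  obtain ⟨O, hO, hzO, hcd⟩ := contDiffAt_open hf
  have hev : pT f =ᶠ[𝓝 z] fun p => fderiv ℝ f p eT :=
    eventuallyEq_of_mem (hO.mem_nhds hzO) (fun p hp => pT_eq (diffAt_of_open hO hcd p hp))
  have hda : DifferentiableAt ℝ (fun p => fderiv ℝ f p eT) z := diffAt_fderiv_apply hf _
  rw [pY_eq j (hda.congr_of_eventuallyEq hev), hev.fderiv_eq]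
  rfl

lemma pTpT_eq (hf : ContDiffAt ℝ 2 f z) :
    pT (pT f) z = sndD f z eT eT := by
  obtain ⟨O, hO, hzO, hcd⟩ := contDiffAt_open hf
  have hev : pT f =ᶠ[𝓝 z] fun p => fderiv ℝ f p eT :=
    eventuallyEq_of_mem (hO.mem_nhds hzO) (fun p hp => pT_eq (diffAt_of_open hO hcd p hp))
  have hda : DifferentiableAt ℝ (fun p => fderiv ℝ f p eT) z := diffAt_fderiv_apply hf _
  rw [pT_eq (hda.congr_of_eventuallyEq hev), hev.fderiv_eq]
  rfl

lemma pLpL_eq (hf : ContDiffAt ℝ 2 f z) :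
    pL (pL f) z = sndD f z eL eL := by
  obtain ⟨O, hO, hzO, hcd⟩ := contDiffAt_open hf
  have hev : pL f =ᶠ[𝓝 z] fun p => fderiv ℝ f p eL :=
    eventuallyEq_of_mem (hO.mem_nhds hzO) (fun p hp => pL_eq (diffAt_of_open hO hcd p hp))
  have hda : DifferentiableAt ℝ (fun p => fderiv ℝ f p eL) z := diffAt_fderiv_apply hf _
  rw [pL_eq (hda.congr_of_eventuallyEq hev), hev.fderiv_eq]
  rfl

/-- Sum-of-squares representation of `Lop`. -/
lemma lop_rep (hf : ContDiffAt ℝ 2 f z) :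
    Lop f z = (∑ j, (Hq f z (eX j + (2 * z.2.1 j) • eT) + Hq f z (eY j + (-(2 * z.1 j)) • eT)))
      + Hq f z eL + Hq f z ((2 * z.2.2.2) • eT) := by
  have e1 : ∀ j, Hq f z (eX j + (2 * z.2.1 j) • eT) + Hq f z (eY j + (-(2 * z.1 j)) • eT)
      = (pX j (pX j f) z + pY j (pY j f) z + 4 * z.2.1 j * pX j (pT f) z
          - 4 * z.1 j * pY j (pT f) z)
        + (4 * (z.1 j ^ 2 + z.2.1 j ^ 2)) * pT (pT f) z := by
    intro j
    rw [Hq_expand hf, Hq_expand hf, pXpX_eq hf j, pYpY_eq hf j, ← pXpT_eq hf j, ← pYpT_eq hf j,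
      ← pTpT_eq hf]
    ring
  have e2 : Hq f z eL = pL (pL f) z := by
    rw [Hq, pLpL_eq hf]
  have e3 : Hq f z ((2 * z.2.2.2) • eT) = 4 * z.2.2.2 ^ 2 * pT (pT f) z := by
    rw [Hq_smul hf, ← pTpT_eq hf]; ring
  rw [Finset.sum_congr rfl (fun j _ => e1 j), Finset.sum_add_distrib, e2, e3]
  have e4 : (∑ j, (4 * (z.1 j ^ 2 + z.2.1 j ^ 2)) * pT (pT f) z)
      = 4 * ((∑ j, z.1 j ^ 2) + (∑ j, z.2.1 j ^ 2)) * pT (pT f) z := by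
    have e5 : (∑ j, (4 * (z.1 j ^ 2 + z.2.1 j ^ 2)))
        = 4 * ((∑ j, z.1 j ^ 2) + (∑ j, z.2.1 j ^ 2)) := by
      rw [← Finset.mul_sum, Finset.sum_add_distrib]
    rw [← Finset.sum_mul, e5]
  rw [e4, Lop, subLap]
  ring

lemma line_hasDerivAt' (z v : Pt n) (s₀ : ℝ) :
    HasDerivAt (fun s : ℝ => z + s • v) v s₀ := by
  simpa using ((hasDerivAt_id s₀).smul_const v).const_add z

/-- Second derivative test: at a local minimum, `Hq` is positive semidefinite. -/
lemma isLocalMin_Hq_nonneg (hf : ContDiffAt ℝ 2 f z) (hmin : IsLocalMin f z) (v : Pt n) :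
    0 ≤ Hq f z v := by
  by_contra hneg
  push_neg at hneg
  obtain ⟨O, hO, hzO, hcd⟩ := contDiffAt_open hf
  have hlc : Continuous (fun s : ℝ => z + s • v) := by fun_prop
  have hO' : IsOpen {s : ℝ | z + s • v ∈ O} := hO.preimage hlc
  have h0O : (0 : ℝ) ∈ {s : ℝ | z + s • v ∈ O} := by simp [hzO]
  obtain ⟨δ₀, hδ₀, hballO⟩ := Metric.isOpen_iff.1 hO' 0 h0O
  have hg : ∀ s ∈ Metric.ball (0 : ℝ) δ₀,
      HasDerivAt (fun r => f (z + r • v)) (fderiv ℝ f (z + s • v) v) s := by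
    intro s hs
    exact ((diffAt_of_open hO hcd _ (hballO hs)).hasFDerivAt).comp_hasDerivAt s
      (line_hasDerivAt' z v s)
  -- the function s ↦ ∂_v f (z + s v)
  set G1 : ℝ → ℝ := fun s => fderiv ℝ f (z + s • v) v with hG1def
  have hG1 : HasDerivAt G1 (Hq f z v) 0 := by
    have hda := diffAt_fderiv_apply hf v
    have hda' : HasFDerivAt (fun p => fderiv ℝ f p v)
        (fderiv ℝ (fun p => fderiv ℝ f p v) z) (z + (0 : ℝ) • v) := by
      simpa using hda.hasFDerivAt
    have h2 := hda'.comp_hasDerivAt 0 (line_hasDerivAt' z v 0)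
    exact h2
  -- local minimum along the line
  have hming : IsLocalMin (fun s : ℝ => f (z + s • v)) 0 := by
    have ht : Filter.Tendsto (fun s : ℝ => z + s • v) (𝓝 0) (𝓝 z) := by
      have := hlc.tendsto 0
      simpa using this
    have := ht.eventually hmin
    simpa [IsLocalMin, IsMinFilter] using this
  have hG10 : G1 0 = 0 := by
    have h0 : HasDerivAt (fun r : ℝ => f (z + r • v)) (G1 0) 0 :=
      hg 0 (Metric.mem_ball_self hδ₀)
    have := hming.deriv_eq_zero
    rw [h0.deriv] at this
    exact this
  -- slope of G1 near 0 from the right is close to Hq < 0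
  have hslope := hasDerivAt_iff_tendsto_slope.1 hG1
  have hmono : 𝓝[>] (0 : ℝ) ≤ 𝓝[≠] (0 : ℝ) :=
    nhdsWithin_mono 0 (fun s hs => ne_of_gt hs)
  have hev1 : ∀ᶠ s in 𝓝[>] (0 : ℝ), slope G1 0 s < Hq f z v / 2 :=
    (hslope.mono_left hmono).eventually_lt_const (by linarith)
  have hev3 : ∀ᶠ s in 𝓝[>] (0 : ℝ), G1 s < 0 := by
    filter_upwards [hev1, self_mem_nhdsWithin] with s hs hs0
    have hs0' : (0 : ℝ) < s := hs0
    have : slope G1 0 s = G1 s / s := by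
      rw [slope_def_field, hG10]
      simp [div_eq_mul_inv]
    rw [this] at hs
    have hdiv : G1 s / s < 0 := lt_of_lt_of_le hs (by linarith)
    have := mul_neg_of_neg_of_pos hdiv hs0'
    rwa [div_mul_cancel₀ _ (ne_of_gt hs0')] at this
  have hev4 : ∀ᶠ s in 𝓝[>] (0 : ℝ), s ∈ Metric.ball (0 : ℝ) δ₀ :=
    mem_nhdsWithin_of_mem_nhds (Metric.ball_mem_nhds 0 hδ₀)
  have hev5 : ∀ᶠ s in 𝓝[>] (0 : ℝ), f z ≤ f (z + s • v) := by
    refine mem_nhdsWithin_of_mem_nhds ?_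
    have := hming
    have h' : ∀ᶠ s in 𝓝 (0:ℝ), f z ≤ f (z + s • v) := by simpa [IsLocalMin, IsMinFilter] using this
    exact h'
  obtain ⟨t, ht, hsub⟩ := mem_nhdsGT_iff_exists_Ioo_subset.1
    ((hev3.and (hev4.and hev5)) : _ ∈ 𝓝[>] (0:ℝ))
  have ht0 : (0 : ℝ) < t := ht
  set t2 := t / 2 with ht2def
  have ht20 : 0 < t2 := by positivity
  have ht2t : t2 < t := by simp [ht2def]; linarith
  have hanti : StrictAntiOn (fun s : ℝ => f (z + s • v)) (Set.Icc 0 t2) := by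
    apply strictAntiOn_of_deriv_neg (convex_Icc 0 t2)
    · intro s hs
      have hball2 : s ∈ Metric.ball (0 : ℝ) δ₀ := by
        rcases eq_or_lt_of_le hs.1 with h | h
        · rw [← h]; exact Metric.mem_ball_self hδ₀
        · exact (hsub ⟨h, lt_of_le_of_lt hs.2 ht2t⟩).2.1
      exact (hg s hball2).continuousAt.continuousWithinAt
    · intro s hs
      rw [interior_Icc] at hs
      have hmem : s ∈ Set.Ioo 0 t := ⟨hs.1, lt_trans hs.2 ht2t⟩
      rw [(hg s (hsub hmem).2.1).deriv]
      exact (hsub hmem).1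
  have hlt : f (z + t2 • v) < f (z + (0:ℝ) • v) :=
    hanti (Set.left_mem_Icc.2 ht20.le) ⟨ht20.le, le_rfl⟩ ht20
  have hge : f z ≤ f (z + t2 • v) := (hsub ⟨ht20, ht2t⟩).2.2
  simp only [zero_smul, add_zero] at hlt
  linarith
/-! ### The gauge quartic and the barrier function -/

def SS (w z : Pt n) : ℝ :=
  (∑ j, (z.1 j - w.1 j) ^ 2) + (∑ j, (z.2.1 j - w.2.1 j) ^ 2) + (z.2.2.2 - w.2.2.2) ^ 2

def TT (w z : Pt n) : ℝ :=
  z.2.2.1 - w.2.2.1 - 2 * ∑ j, (z.1 j * w.2.1 j - z.2.1 j * w.1 j)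

def uu (w z : Pt n) : ℝ :=
  (∑ j, (z.1 j - w.1 j) ^ 2) + (∑ j, (z.2.1 j - w.2.1 j) ^ 2)

def FF (w z : Pt n) : ℝ := SS w z ^ 2 + TT w z ^ 2

lemma SS_eq_uu (w z : Pt n) : SS w z = uu w z + (z.2.2.2 - w.2.2.2) ^ 2 := rfl

lemma uu_nonneg (w z : Pt n) : 0 ≤ uu w z := by
  have h1 : (0:ℝ) ≤ ∑ j, (z.1 j - w.1 j) ^ 2 := Finset.sum_nonneg fun j _ => sq_nonneg _
  have h2 : (0:ℝ) ≤ ∑ j, (z.2.1 j - w.2.1 j) ^ 2 := Finset.sum_nonneg fun j _ => sq_nonneg _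
  unfold uu; linarith

lemma SS_nonneg (w z : Pt n) : 0 ≤ SS w z := by
  have := uu_nonneg w z
  rw [SS_eq_uu]; nlinarith [sq_nonneg (z.2.2.2 - w.2.2.2)]

lemma FF_nonneg (w z : Pt n) : 0 ≤ FF w z := by
  unfold FF; positivity

lemma gaugeQuartic_eq (w z : Pt n) : gaugeQuartic w z = FF w z := by
  unfold gaugeQuartic rSq gmul ginv FF SS TT
  simp only [Pi.add_apply, Pi.neg_apply]
  have e1 : (∑ j, (-w.1 j + z.1 j) ^ 2) = ∑ j, (z.1 j - w.1 j) ^ 2 :=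
    Finset.sum_congr rfl fun j _ => by ring
  have e2 : (∑ j, (-w.2.1 j + z.2.1 j) ^ 2) = ∑ j, (z.2.1 j - w.2.1 j) ^ 2 :=
    Finset.sum_congr rfl fun j _ => by ring
  have e3 : (∑ j, (z.1 j * -w.2.1 j - z.2.1 j * -w.1 j))
      = -∑ j, (z.1 j * w.2.1 j - z.2.1 j * w.1 j) := by
    rw [← Finset.sum_neg_distrib]
    exact Finset.sum_congr rfl fun j _ => by ring
  rw [e1, e2, e3]
  ring

/-- Coefficients of the restriction to a line. -/
def aS (w z v : Pt n) : ℝ :=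
  2 * ((∑ j, (z.1 j - w.1 j) * v.1 j) + (∑ j, (z.2.1 j - w.2.1 j) * v.2.1 j)
    + (z.2.2.2 - w.2.2.2) * v.2.2.2)

def bS (v : Pt n) : ℝ := (∑ j, v.1 j ^ 2) + (∑ j, v.2.1 j ^ 2) + v.2.2.2 ^ 2

def aT (w v : Pt n) : ℝ := v.2.2.1 - 2 * ∑ j, (v.1 j * w.2.1 j - v.2.1 j * w.1 j)

lemma add_smul_comp (z v : Pt n) (s : ℝ) :
    (z + s • v).1 = fun j => z.1 j + s * v.1 j := rfl

lemma SS_line (w z v : Pt n) (s : ℝ) :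
    SS w (z + s • v) = SS w z + s * aS w z v + s ^ 2 * bS v := by
  unfold SS aS bS
  simp only [Prod.fst_add, Prod.snd_add, Prod.smul_fst, Prod.smul_snd, Pi.add_apply,
    Pi.smul_apply, smul_eq_mul]
  have e1 : (∑ j, (z.1 j + s * v.1 j - w.1 j) ^ 2)
      = ∑ j, ((z.1 j - w.1 j) ^ 2 + s * (2 * ((z.1 j - w.1 j) * v.1 j)) + s ^ 2 * v.1 j ^ 2) :=
    Finset.sum_congr rfl fun j _ => by ring
  have e2 : (∑ j, (z.2.1 j + s * v.2.1 j - w.2.1 j) ^ 2)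
      = ∑ j, ((z.2.1 j - w.2.1 j) ^ 2 + s * (2 * ((z.2.1 j - w.2.1 j) * v.2.1 j))
          + s ^ 2 * v.2.1 j ^ 2) :=
    Finset.sum_congr rfl fun j _ => by ring
  rw [e1, e2]
  simp only [Finset.sum_add_distrib, ← Finset.mul_sum]
  ring

lemma TT_line (w z v : Pt n) (s : ℝ) :
    TT w (z + s • v) = TT w z + s * aT w v := by
  unfold TT aT
  simp only [Prod.fst_add, Prod.snd_add, Prod.smul_fst, Prod.smul_snd, Pi.add_apply,
    Pi.smul_apply, smul_eq_mul]
  have e1 : (∑ j, ((z.1 j + s * v.1 j) * w.2.1 j - (z.2.1 j + s * v.2.1 j) * w.1 j))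
      = ∑ j, ((z.1 j * w.2.1 j - z.2.1 j * w.1 j) + s * (v.1 j * w.2.1 j - v.2.1 j * w.1 j)) :=
    Finset.sum_congr rfl fun j _ => by ring
  rw [e1]
  simp only [Finset.sum_add_distrib, ← Finset.mul_sum]
  ring

lemma lam_line (z v : Pt n) (s : ℝ) : (z + s • v).2.2.2 = z.2.2.2 + s * v.2.2.2 := rfl

/-! ### One-dimensional computations for the barrier -/

def A1 (S p b τ q s : ℝ) : ℝ := (S + s * p + s ^ 2 * b) ^ 2 + (τ + s * q) ^ 2

def A1' (S p b τ q s : ℝ) : ℝ :=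
  2 * (S + s * p + s ^ 2 * b) * (p + 2 * s * b) + 2 * (τ + s * q) * q

def Gg (κ K α l e S p b τ q s : ℝ) : ℝ :=
  Real.cosh (κ * (l + s * e)) * (Real.exp (-(α * A1 S p b τ q s)) - K)

def Gg' (κ K α l e S p b τ q s : ℝ) : ℝ :=
  κ * e * Real.sinh (κ * (l + s * e)) * (Real.exp (-(α * A1 S p b τ q s)) - K)
    + Real.cosh (κ * (l + s * e))
      * (Real.exp (-(α * A1 S p b τ q s)) * (-(α * A1' S p b τ q s)))

def Gg2 (κ K α l e S p b τ q : ℝ) : ℝ :=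
  (κ * e) ^ 2 * Real.cosh (κ * l) * (Real.exp (-(α * (S ^ 2 + τ ^ 2))) - K)
    + 2 * (κ * e * Real.sinh (κ * l) * (Real.exp (-(α * (S ^ 2 + τ ^ 2)))
        * (-(α * (2 * S * p + 2 * τ * q)))))
    + Real.cosh (κ * l) * (Real.exp (-(α * (S ^ 2 + τ ^ 2)))
        * ((α * (2 * S * p + 2 * τ * q)) ^ 2 - α * (2 * p ^ 2 + 4 * S * b + 2 * q ^ 2)))

lemma P_hasDeriv (S p b : ℝ) (s : ℝ) :
    HasDerivAt (fun s : ℝ => S + s * p + s ^ 2 * b) (p + 2 * s * b) s := by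
  have h := (((hasDerivAt_id s).mul_const p).const_add S).add ((hasDerivAt_pow 2 s).mul_const b)
  exact h.congr_deriv (by push_cast; ring)

lemma Q_hasDeriv (τ q : ℝ) (s : ℝ) :
    HasDerivAt (fun s : ℝ => τ + s * q) q s := by
  simpa using ((hasDerivAt_id s).mul_const q).const_add τ

lemma A1_hasDeriv (S p b τ q s : ℝ) :
    HasDerivAt (A1 S p b τ q) (A1' S p b τ q s) s := by
  unfold A1 A1'
  have h1 := (P_hasDeriv S p b s).pow 2
  have h2 := (Q_hasDeriv τ q s).pow 2
  exact (h1.add h2).congr_deriv (by push_cast; ring)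

lemma linarg_hasDeriv (κ l e : ℝ) (s : ℝ) :
    HasDerivAt (fun s : ℝ => κ * (l + s * e)) (κ * e) s := by
  have := (((hasDerivAt_id s).mul_const e).const_add l).const_mul κ
  simpa using this

lemma Gg_hasDeriv (κ K α l e S p b τ q s : ℝ) :
    HasDerivAt (Gg κ K α l e S p b τ q) (Gg' κ K α l e S p b τ q s) s := by
  have hc := (linarg_hasDeriv κ l e s).cosh
  have hA := A1_hasDeriv S p b τ q s
  have he : HasDerivAt (fun s => Real.exp (-(α * A1 S p b τ q s)) - K)
      (Real.exp (-(α * A1 S p b τ q s)) * (-(α * A1' S p b τ q s))) s := by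
    have := ((hA.const_mul α).neg).exp
    simpa using this.sub_const K
  have h := hc.mul he
  exact h.congr_deriv (by unfold Gg'; ring)

lemma Gg'_hasDeriv0 (κ K α l e S p b τ q : ℝ) :
    HasDerivAt (Gg' κ K α l e S p b τ q) (Gg2 κ K α l e S p b τ q) 0 := by
  have hs := (linarg_hasDeriv κ l e 0).sinh
  have hc := (linarg_hasDeriv κ l e 0).cosh
  have hA := A1_hasDeriv S p b τ q 0
  have hE : HasDerivAt (fun s => Real.exp (-(α * A1 S p b τ q s)))
      (Real.exp (-(α * A1 S p b τ q 0)) * (-(α * A1' S p b τ q 0))) 0 := by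
    have := ((hA.const_mul α).neg).exp
    simpa using this
  have hEK := hE.sub_const K
  -- derivative of A1'
  have hA1' : HasDerivAt (A1' S p b τ q)
      (2 * (p + 2 * 0 * b) * (p + 2 * 0 * b) + (2 * (S + 0 * p + 0 ^ 2 * b)) * (2 * b)
        + 2 * q * q) 0 := by
    have t1 := ((P_hasDeriv S p b 0).const_mul 2).mul
      (by simpa using ((hasDerivAt_id (0:ℝ)).const_mul 2).mul_const b |>.const_add p :
        HasDerivAt (fun s : ℝ => p + 2 * s * b) (2 * b) 0)
    have t2 := ((Q_hasDeriv τ q 0).const_mul 2).mul_const q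
    have := t1.add t2
    exact this
  have hT1 := (hs.const_mul (κ * e)).mul hEK
  have hT2 := hc.mul (hE.mul ((hA1'.const_mul α).neg))
  have h := hT1.add hT2
  have harg : (fun s : ℝ => κ * e * Real.sinh (κ * (l + s * e))
      * (Real.exp (-(α * A1 S p b τ q s)) - K)
      + Real.cosh (κ * (l + s * e))
        * (Real.exp (-(α * A1 S p b τ q s)) * (-(α * A1' S p b τ q s))))
      = Gg' κ K α l e S p b τ q := rfl
  rw [show Gg' κ K α l e S p b τ q = (fun s : ℝ =>
      (κ * e) * Real.sinh (κ * (l + s * e)) * (Real.exp (-(α * A1 S p b τ q s)) - K)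
      + Real.cosh (κ * (l + s * e))
        * (Real.exp (-(α * A1 S p b τ q s)) * (-(α * A1' S p b τ q s)))) from rfl]
  refine h.congr_deriv ?_
  unfold Gg2 A1 A1'
  norm_num
  ring
/-! ### The barrier function -/

def bar (w : Pt n) (κ α K : ℝ) (z : Pt n) : ℝ :=
  Real.cosh (κ * (z.2.2.2 - w.2.2.2)) * (Real.exp (-(α * FF w z)) - K)

lemma bar_line (w : Pt n) (κ α K : ℝ) (z v : Pt n) :
    (fun s : ℝ => bar w κ α K (z + s • v))
      = Gg κ K α (z.2.2.2 - w.2.2.2) v.2.2.2 (SS w z) (aS w z v) (bS v) (TT w z) (aT w v) := by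
  funext s
  unfold bar Gg A1 FF
  rw [SS_line, TT_line, lam_line]
  have e1 : κ * (z.2.2.2 + s * v.2.2.2 - w.2.2.2)
      = κ * (z.2.2.2 - w.2.2.2 + s * v.2.2.2) := by ring
  rw [e1]

lemma contDiff_SS (w : Pt n) : ContDiff ℝ 2 (SS w) := by
  unfold SS
  apply ContDiff.add
  apply ContDiff.add
  · exact ContDiff.sum fun j _ => by fun_prop
  · exact ContDiff.sum fun j _ => by fun_prop
  · fun_prop

lemma contDiff_TT (w : Pt n) : ContDiff ℝ 2 (TT w) := by
  unfold TT
  apply ContDiff.sub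
  · fun_prop
  · exact contDiff_const.mul (ContDiff.sum fun j _ => by fun_prop)

lemma contDiff_FF (w : Pt n) : ContDiff ℝ 2 (FF w) := by
  unfold FF
  exact ((contDiff_SS w).pow 2).add ((contDiff_TT w).pow 2)

lemma contDiff_bar (w : Pt n) (κ α K : ℝ) : ContDiff ℝ 2 (bar w κ α K) := by
  unfold bar
  apply ContDiff.mul
  · exact Real.contDiff_cosh.comp (by fun_prop)
  · exact ContDiff.sub (Real.contDiff_exp.comp (by exact (contDiff_const.mul (contDiff_FF w)).neg)) contDiff_const

lemma continuous_FF (w : Pt n) : Continuous (FF w) := (contDiff_FF w).continuous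

lemma bar_dir (w : Pt n) (κ α K : ℝ) (z v : Pt n) (s : ℝ) :
    HasDerivAt (fun s : ℝ => bar w κ α K (z + s • v))
      (Gg' κ K α (z.2.2.2 - w.2.2.2) v.2.2.2 (SS w z) (aS w z v) (bS v) (TT w z) (aT w v) s) s := by
  rw [bar_line]
  exact Gg_hasDeriv _ _ _ _ _ _ _ _ _ _ s

/-- First variation of `bar` along `v`, at every point. -/
lemma fderiv_bar_line (w : Pt n) (κ α K : ℝ) (z v : Pt n) (s : ℝ) :
    fderiv ℝ (bar w κ α K) (z + s • v) v
      = Gg' κ K α (z.2.2.2 - w.2.2.2) v.2.2.2 (SS w z) (aS w z v) (bS v) (TT w z) (aT w v) s := by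
  have hdiff : DifferentiableAt ℝ (bar w κ α K) (z + s • v) :=
    ((contDiff_bar w κ α K).differentiable two_ne_zero).differentiableAt
  have h1 : HasDerivAt (fun r : ℝ => bar w κ α K (z + r • v))
      (fderiv ℝ (bar w κ α K) (z + s • v) v) s :=
    by have := hdiff.hasFDerivAt.comp_hasDerivAt s (line_hasDerivAt' z v s); exact this
  exact h1.unique (bar_dir w κ α K z v s)

/-- The second-derivative quadratic form of `bar`. -/
lemma Hq_bar (w : Pt n) (κ α K : ℝ) (z v : Pt n) :
    Hq (bar w κ α K) z v
      = Gg2 κ K α (z.2.2.2 - w.2.2.2) v.2.2.2 (SS w z) (aS w z v) (bS v) (TT w z) (aT w v) := by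
  have hbar2 : ContDiffAt ℝ 2 (bar w κ α K) z := (contDiff_bar w κ α K).contDiffAt
  have hda : DifferentiableAt ℝ (fun p => fderiv ℝ (bar w κ α K) p v) z :=
    diffAt_fderiv_apply hbar2 v
  have hda' : HasFDerivAt (fun p => fderiv ℝ (bar w κ α K) p v)
      (fderiv ℝ (fun p => fderiv ℝ (bar w κ α K) p v) z) (z + (0:ℝ) • v) := by
    simpa using hda.hasFDerivAt
  have h2 : HasDerivAt (fun s : ℝ => fderiv ℝ (bar w κ α K) (z + s • v) v)
      (Hq (bar w κ α K) z v) 0 := by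
    have := hda'.comp_hasDerivAt 0 (line_hasDerivAt' z v 0)
    exact this
  have h3 : HasDerivAt (fun s : ℝ => fderiv ℝ (bar w κ α K) (z + s • v) v)
      (Gg2 κ K α (z.2.2.2 - w.2.2.2) v.2.2.2 (SS w z) (aS w z v) (bS v) (TT w z) (aT w v)) 0 := by
    have heq : (fun s : ℝ => fderiv ℝ (bar w κ α K) (z + s • v) v)
        = Gg' κ K α (z.2.2.2 - w.2.2.2) v.2.2.2 (SS w z) (aS w z v) (bS v) (TT w z) (aT w v) := by
      funext s; exact fderiv_bar_line w κ α K z v s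
    rw [heq]
    exact Gg'_hasDeriv0 _ _ _ _ _ _ _ _ _ _
  exact h2.unique h3
/-! ### Parameters of the canonical directions -/

lemma sum_single_mul (g : Fin n → ℝ) (j : Fin n) :
    (∑ k, g k * (Pi.single j 1 : Fin n → ℝ) k) = g j := by
  have : ∀ k, g k * (Pi.single j 1 : Fin n → ℝ) k = if k = j then g k else 0 := fun k => by
    rcases eq_or_ne k j with h | h
    · subst h; simp
    · simp [Pi.single_eq_of_ne h, h]
  rw [Finset.sum_congr rfl fun k _ => this k]
  simp

lemma sum_single_sq (j : Fin n) : (∑ k, (Pi.single j 1 : Fin n → ℝ) k ^ 2) = 1 := by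
  have : ∀ k, (Pi.single j 1 : Fin n → ℝ) k ^ 2 = if k = j then 1 else 0 := fun k => by
    rcases eq_or_ne k j with h | h
    · subst h; simp
    · simp [Pi.single_eq_of_ne h, h]
  rw [Finset.sum_congr rfl fun k _ => this k]
  simp

lemma dirX_comp (j : Fin n) (c : ℝ) :
    (eX j + c • eT : Pt n) = (Pi.single j 1, 0, c, 0) := by
  unfold eX eT
  refine Prod.ext ?_ (Prod.ext ?_ (Prod.ext ?_ ?_)) <;> simp

lemma dirY_comp (j : Fin n) (c : ℝ) :
    (eY j + c • eT : Pt n) = (0, Pi.single j 1, c, 0) := by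
  unfold eY eT
  refine Prod.ext ?_ (Prod.ext ?_ (Prod.ext ?_ ?_)) <;> simp

lemma dirT_comp (c : ℝ) : (c • eT : Pt n) = (0, 0, c, 0) := by
  unfold eT
  refine Prod.ext ?_ (Prod.ext ?_ (Prod.ext ?_ ?_)) <;> simp

lemma aS_dirX (w z : Pt n) (j : Fin n) (c : ℝ) :
    aS w z (eX j + c • eT) = 2 * (z.1 j - w.1 j) := by
  rw [dirX_comp]; unfold aS
  simp [sum_single_mul]

lemma aS_dirY (w z : Pt n) (j : Fin n) (c : ℝ) :
    aS w z (eY j + c • eT) = 2 * (z.2.1 j - w.2.1 j) := by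
  rw [dirY_comp]; unfold aS
  simp [sum_single_mul]

lemma aS_dirT (w z : Pt n) (c : ℝ) : aS w z (c • eT) = 0 := by
  rw [dirT_comp]; unfold aS; simp

lemma aS_dirL (w z : Pt n) : aS w z eL = 2 * (z.2.2.2 - w.2.2.2) := by
  unfold aS eL; simp

lemma bS_dirX (j : Fin n) (c : ℝ) : bS (eX j + c • eT : Pt n) = 1 := by
  rw [dirX_comp]; unfold bS
  simp [sum_single_sq]

lemma bS_dirY (j : Fin n) (c : ℝ) : bS (eY j + c • eT : Pt n) = 1 := by
  rw [dirY_comp]; unfold bS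
  simp [sum_single_sq]

lemma bS_dirT (c : ℝ) : bS (c • eT : Pt n) = 0 := by
  rw [dirT_comp]; unfold bS; simp

lemma bS_dirL : bS (eL : Pt n) = 1 := by
  unfold bS eL; simp

lemma aT_dirX (w : Pt n) (j : Fin n) (c : ℝ) :
    aT w (eX j + c • eT) = c - 2 * w.2.1 j := by
  rw [dirX_comp]; unfold aT
  have : (∑ k, ((Pi.single j 1 : Fin n → ℝ) k * w.2.1 k - (0:Fin n → ℝ) k * w.1 k))
      = ∑ k, w.2.1 k * (Pi.single j 1 : Fin n → ℝ) k := Finset.sum_congr rfl fun k _ => by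
    simp [mul_comm]
  simp only [this, sum_single_mul]

lemma aT_dirY (w : Pt n) (j : Fin n) (c : ℝ) :
    aT w (eY j + c • eT) = c + 2 * w.1 j := by
  rw [dirY_comp]; unfold aT
  have : (∑ k, ((0:Fin n → ℝ) k * w.2.1 k - (Pi.single j 1 : Fin n → ℝ) k * w.1 k))
      = ∑ k, -(w.1 k * (Pi.single j 1 : Fin n → ℝ) k) := Finset.sum_congr rfl fun k _ => by
    simp [mul_comm]
  rw [this, Finset.sum_neg_distrib, sum_single_mul]
  ring

lemma aT_dirT (w : Pt n) (c : ℝ) : aT w (c • eT) = c := by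
  rw [dirT_comp]; unfold aT; simp

lemma aT_dirL (w : Pt n) : aT w (eL : Pt n) = 0 := by
  unfold aT eL; simp

lemma lam_dirX (j : Fin n) (c : ℝ) : (eX j + c • eT : Pt n).2.2.2 = 0 := by
  rw [dirX_comp]

lemma lam_dirY (j : Fin n) (c : ℝ) : (eY j + c • eT : Pt n).2.2.2 = 0 := by
  rw [dirY_comp]

lemma lam_dirT (c : ℝ) : ((c • eT : Pt n)).2.2.2 = 0 := by rw [dirT_comp]

lemma lam_dirL : ((eL : Pt n)).2.2.2 = 1 := rfl

lemma Gg2_e0 (κ K α l S p b τ q : ℝ) :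
    Gg2 κ K α l 0 S p b τ q
      = Real.cosh (κ * l) * (Real.exp (-(α * (S ^ 2 + τ ^ 2)))
          * ((α * (2 * S * p + 2 * τ * q)) ^ 2 - α * (2 * p ^ 2 + 4 * S * b + 2 * q ^ 2))) := by
  unfold Gg2; ring

lemma sum_uu (w z : Pt n) :
    (∑ j, ((z.1 j - w.1 j) ^ 2 + (z.2.1 j - w.2.1 j) ^ 2)) = uu w z := by
  rw [Finset.sum_add_distrib]; rfl

/-- The fundamental formula for `ℒ` applied to the barrier. -/
lemma lop_bar (w : Pt n) (κ α K : ℝ) (z : Pt n) :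
    Lop (bar w κ α K) z
      = Real.cosh (κ * (z.2.2.2 - w.2.2.2)) * (Real.exp (-(α * FF w z))
          * (α ^ 2 * (16 * (uu w z * FF w z + SS w z ^ 2 * (z.2.2.2 - w.2.2.2) ^ 2
              + z.2.2.2 ^ 2 * TT w z ^ 2))
            - α * (16 * uu w z + (8 * n + 4) * SS w z + 8 * (z.2.2.2 - w.2.2.2) ^ 2
              + 8 * z.2.2.2 ^ 2)))
        + κ ^ 2 * Real.cosh (κ * (z.2.2.2 - w.2.2.2)) * (Real.exp (-(α * FF w z)) - K)
        - 8 * α * κ * SS w z * (z.2.2.2 - w.2.2.2)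
            * Real.sinh (κ * (z.2.2.2 - w.2.2.2)) * Real.exp (-(α * FF w z)) := by
  have hcd : ContDiffAt ℝ 2 (bar w κ α K) z := (contDiff_bar w κ α K).contDiffAt
  rw [lop_rep hcd]
  -- the X/Y summands
  set C1 : ℝ := Real.cosh (κ * (z.2.2.2 - w.2.2.2)) * Real.exp (-(α * FF w z))
      * (16 * α ^ 2 * FF w z - 16 * α) with hC1
  set C2 : ℝ := Real.cosh (κ * (z.2.2.2 - w.2.2.2)) * Real.exp (-(α * FF w z))
      * (-(8 * α * SS w z)) with hC2
  have perj : ∀ j : Fin n,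
      Hq (bar w κ α K) z (eX j + (2 * z.2.1 j) • eT)
        + Hq (bar w κ α K) z (eY j + (-(2 * z.1 j)) • eT)
      = C1 * ((z.1 j - w.1 j) ^ 2 + (z.2.1 j - w.2.1 j) ^ 2) + C2 := by
    intro j
    rw [Hq_bar, Hq_bar, aS_dirX, aS_dirY, bS_dirX, bS_dirY, aT_dirX, aT_dirY, lam_dirX, lam_dirY,
      Gg2_e0, Gg2_e0, hC1, hC2]
    unfold FF
    ring
  have hL : Hq (bar w κ α K) z eL
      = Gg2 κ K α (z.2.2.2 - w.2.2.2) 1 (SS w z) (2 * (z.2.2.2 - w.2.2.2)) 1 (TT w z) 0 := by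
    rw [Hq_bar, aS_dirL, bS_dirL, aT_dirL, lam_dirL]
  have hT : Hq (bar w κ α K) z ((2 * z.2.2.2) • eT)
      = Gg2 κ K α (z.2.2.2 - w.2.2.2) 0 (SS w z) 0 0 (TT w z) (2 * z.2.2.2) := by
    rw [Hq_bar, aS_dirT, bS_dirT, aT_dirT, lam_dirT]
  rw [Finset.sum_congr rfl (fun j _ => perj j), Finset.sum_add_distrib, Finset.sum_const,
    ← Finset.mul_sum, sum_uu, hL, hT, Gg2_e0]
  unfold Gg2
  have hFF : SS w z ^ 2 + TT w z ^ 2 = FF w z := rfl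
  rw [hFF]
  simp only [Finset.card_univ, Fintype.card_fin, nsmul_eq_mul, hC1, hC2]
  ring
/-! ### Elementary inequalities -/

lemma self_sinh_le (t : ℝ) : t * Real.sinh t ≤ t ^ 2 * Real.cosh t := by
  have key : ∀ u : ℝ, 0 ≤ u → Real.sinh u ≤ u * Real.cosh u := by
    intro u hu
    set φ : ℝ → ℝ := fun x => x * Real.cosh x - Real.sinh x with hφ
    have hD : ∀ x : ℝ, HasDerivAt φ (x * Real.sinh x) x := by
      intro x
      have h1 : HasDerivAt (fun x : ℝ => x * Real.cosh x)
          (1 * Real.cosh x + x * Real.sinh x) x :=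
        (hasDerivAt_id x).mul (Real.hasDerivAt_cosh x)
      have h2 := h1.sub (Real.hasDerivAt_sinh x)
      exact h2.congr_deriv (by ring)
    have hmono : Monotone φ := by
      apply monotone_of_deriv_nonneg
      · exact fun x => (hD x).differentiableAt
      · intro x
        rw [(hD x).deriv]
        rcases le_or_gt 0 x with h | h
        · exact mul_nonneg h (Real.sinh_nonneg_iff.2 h)
        · have hs : Real.sinh x ≤ 0 := by simpa using Real.sinh_le_sinh.2 h.le
          nlinarith [mul_nonneg (neg_nonneg.2 h.le) (neg_nonneg.2 hs)]
    have := hmono hu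
    simp only [hφ] at this
    simp at this
    linarith
  rcases le_or_gt 0 t with h | h
  · have := key t h
    nlinarith
  · have := key (-t) (by linarith)
    rw [Real.sinh_neg, Real.cosh_neg] at this
    nlinarith

lemma SS_le_sq {w z : Pt n} {R : ℝ} (hR : 0 < R) (h2 : FF w z ≤ R ^ 4) : SS w z ≤ R ^ 2 := by
  have h1 : SS w z ^ 2 ≤ R ^ 4 := by
    have : SS w z ^ 2 ≤ FF w z := by unfold FF; nlinarith [sq_nonneg (TT w z)]
    linarith
  nlinarith [SS_nonneg w z, sq_nonneg R]

lemma lsq_le_SS (w z : Pt n) : (z.2.2.2 - w.2.2.2) ^ 2 ≤ SS w z := by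
  rw [SS_eq_uu]; nlinarith [uu_nonneg w z]

lemma uu_le_SS (w z : Pt n) : uu w z ≤ SS w z := by
  rw [SS_eq_uu]; nlinarith [sq_nonneg (z.2.2.2 - w.2.2.2)]

lemma SS_sq_le_FF (w z : Pt n) : SS w z ^ 2 ≤ FF w z := by
  unfold FF; nlinarith [sq_nonneg (TT w z)]

/-! ### The coefficient functions `Γ` and `ℒF` -/

def Gam (w z : Pt n) : ℝ :=
  16 * (uu w z * FF w z + SS w z ^ 2 * (z.2.2.2 - w.2.2.2) ^ 2 + z.2.2.2 ^ 2 * TT w z ^ 2)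

def LF (w z : Pt n) : ℝ :=
  16 * uu w z + (8 * n + 4) * SS w z + 8 * (z.2.2.2 - w.2.2.2) ^ 2 + 8 * z.2.2.2 ^ 2

lemma Gam_nonneg (w z : Pt n) : 0 ≤ Gam w z := by
  unfold Gam
  have := uu_nonneg w z
  have := FF_nonneg w z
  positivity

lemma contDiff_uu (w : Pt n) : ContDiff ℝ 2 (uu w) := by
  unfold uu
  apply ContDiff.add
  · exact ContDiff.sum fun j _ => by fun_prop
  · exact ContDiff.sum fun j _ => by fun_prop

lemma continuous_Gam (w : Pt n) : Continuous (Gam w) := by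
  unfold Gam
  have h1 := (contDiff_uu w).continuous
  have h2 := (contDiff_SS w).continuous
  have h3 := (contDiff_TT w).continuous
  have h4 := (contDiff_FF w).continuous
  have h5 : Continuous fun z : Pt n => z.2.2.2 := by fun_prop
  fun_prop

lemma Gam_pos {w z : Pt n} {R : ℝ} (hR : 0 < R) (hcl : w.2.2.2 ≠ 0)
    (h1 : (R / 2) ^ 4 ≤ FF w z) : 0 < Gam w z := by
  have hFpos : 0 < FF w z := lt_of_lt_of_le (by positivity) h1
  rcases lt_or_ge 0 (Gam w z) with h | h
  · exact h
  exfalso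
  have huu := uu_nonneg w z
  have t1 : 0 ≤ uu w z * FF w z := mul_nonneg huu (FF_nonneg w z)
  have t2 : 0 ≤ SS w z ^ 2 * (z.2.2.2 - w.2.2.2) ^ 2 := by positivity
  have t3 : 0 ≤ z.2.2.2 ^ 2 * TT w z ^ 2 := by positivity
  have e1 : uu w z * FF w z = 0 := by unfold Gam at h; nlinarith
  have e2 : SS w z ^ 2 * (z.2.2.2 - w.2.2.2) ^ 2 = 0 := by unfold Gam at h; nlinarith
  have e3 : z.2.2.2 ^ 2 * TT w z ^ 2 = 0 := by unfold Gam at h; nlinarith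
  have huu0 : uu w z = 0 := by
    rcases mul_eq_zero.1 e1 with h' | h'
    · exact h'
    · exact absurd h' (ne_of_gt hFpos)
  have hSS : SS w z = (z.2.2.2 - w.2.2.2) ^ 2 := by rw [SS_eq_uu, huu0, zero_add]
  have hl0 : z.2.2.2 - w.2.2.2 = 0 := by
    by_contra hl
    have hl2 : 0 < (z.2.2.2 - w.2.2.2) ^ 2 := by positivity
    have hSpos : 0 < SS w z := by rw [hSS]; exact hl2
    nlinarith [mul_pos (pow_pos hSpos 2) hl2]
  have hSS0 : SS w z = 0 := by rw [hSS, hl0]; ring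
  have hT : TT w z ^ 2 = FF w z := by unfold FF; rw [hSS0]; ring
  have hTne : TT w z ≠ 0 := by
    intro h'
    rw [h'] at hT
    nlinarith [hT]
  have hz0 : z.2.2.2 = 0 := by
    rcases mul_eq_zero.1 e3 with h' | h'
    · exact pow_eq_zero_iff (by norm_num) |>.1 h'
    · exact absurd (pow_eq_zero_iff (by norm_num) |>.1 h') hTne
  apply hcl
  have := hl0
  rw [hz0] at this
  linarith
/-! ### Compactness of gauge balls -/

lemma abs_le_of_sq_le {a c : ℝ} (h : a ^ 2 ≤ c) : |a| ≤ Real.sqrt c := by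
  have := Real.sqrt_le_sqrt h
  rwa [Real.sqrt_sq_eq_abs] at this

lemma isCompact_FF_le (w : Pt n) (b : ℝ) (hb : 0 ≤ b) :
    IsCompact {z : Pt n | FF w z ≤ b} := by
  have hclosed : IsClosed {z : Pt n | FF w z ≤ b} :=
    isClosed_le (continuous_FF w) continuous_const
  have hbounded : Bornology.IsBounded {z : Pt n | FF w z ≤ b} := by
    rw [isBounded_iff_forall_norm_le]
    set s1 : ℝ := Real.sqrt b with hs1
    set s2 : ℝ := Real.sqrt s1 with hs2
    have hs1nn : 0 ≤ s1 := Real.sqrt_nonneg _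
    have hs2nn : 0 ≤ s2 := Real.sqrt_nonneg _
    set Bx : ℝ := s2 + ‖w.1‖ with hBx
    set By : ℝ := s2 + ‖w.2.1‖ with hBy
    set Bl : ℝ := s2 + |w.2.2.2| with hBl
    set Bt : ℝ := s1 + |w.2.2.1| + 2 * n * (Bx * ‖w.2.1‖ + By * ‖w.1‖) with hBt
    have hBxnn : 0 ≤ Bx := by positivity
    have hBynn : 0 ≤ By := by positivity
    refine ⟨max Bx (max By (max Bt Bl)), ?_⟩
    intro z hz
    simp only [Set.mem_setOf_eq] at hz
    -- basic bounds
    have hSS : SS w z ≤ s1 := by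
      have h1 : SS w z ^ 2 ≤ b := le_trans (SS_sq_le_FF w z) hz
      have := abs_le_of_sq_le h1
      rw [abs_of_nonneg (SS_nonneg w z)] at this
      exact this
    have hTT : |TT w z| ≤ s1 := by
      apply abs_le_of_sq_le
      have : TT w z ^ 2 ≤ FF w z := by unfold FF; nlinarith [sq_nonneg (SS w z)]
      linarith
    have hx : ∀ j, |z.1 j - w.1 j| ≤ s2 := by
      intro j
      apply abs_le_of_sq_le
      have h1 : (z.1 j - w.1 j) ^ 2 ≤ uu w z := by
        unfold uu
        have h2 : (z.1 j - w.1 j) ^ 2 ≤ ∑ k, (z.1 k - w.1 k) ^ 2 :=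
          Finset.single_le_sum (f := fun k => (z.1 k - w.1 k) ^ 2)
            (fun k _ => sq_nonneg _) (Finset.mem_univ j)
        nlinarith [Finset.sum_nonneg (fun k (_ : k ∈ Finset.univ) => sq_nonneg (z.2.1 k - w.2.1 k))]
      exact le_trans h1 (le_trans (uu_le_SS w z) hSS)
    have hy : ∀ j, |z.2.1 j - w.2.1 j| ≤ s2 := by
      intro j
      apply abs_le_of_sq_le
      have h1 : (z.2.1 j - w.2.1 j) ^ 2 ≤ uu w z := by
        unfold uu
        have h2 : (z.2.1 j - w.2.1 j) ^ 2 ≤ ∑ k, (z.2.1 k - w.2.1 k) ^ 2 :=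
          Finset.single_le_sum (f := fun k => (z.2.1 k - w.2.1 k) ^ 2)
            (fun k _ => sq_nonneg _) (Finset.mem_univ j)
        nlinarith [Finset.sum_nonneg (fun k (_ : k ∈ Finset.univ) => sq_nonneg (z.1 k - w.1 k))]
      exact le_trans h1 (le_trans (uu_le_SS w z) hSS)
    have hxj : ∀ j, |z.1 j| ≤ Bx := by
      intro j
      have := norm_le_pi_norm w.1 j
      rw [Real.norm_eq_abs] at this
      have h3 := hx j
      rw [hBx]
      have : |z.1 j| ≤ |z.1 j - w.1 j| + |w.1 j| := by
        have := abs_sub_abs_le_abs_sub (z.1 j) (w.1 j)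
        have h4 := abs_add_le (z.1 j - w.1 j) (w.1 j)
        calc |z.1 j| = |z.1 j - w.1 j + w.1 j| := by ring_nf
          _ ≤ |z.1 j - w.1 j| + |w.1 j| := abs_add_le _ _
      calc |z.1 j| ≤ |z.1 j - w.1 j| + |w.1 j| := this
        _ ≤ s2 + ‖w.1‖ := by
            have := norm_le_pi_norm w.1 j
            rw [Real.norm_eq_abs] at this
            linarith [hx j]
    have hyj : ∀ j, |z.2.1 j| ≤ By := by
      intro j
      have h5 : |z.2.1 j| ≤ |z.2.1 j - w.2.1 j| + |w.2.1 j| := by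
        calc |z.2.1 j| = |z.2.1 j - w.2.1 j + w.2.1 j| := by ring_nf
          _ ≤ |z.2.1 j - w.2.1 j| + |w.2.1 j| := abs_add_le _ _
      have := norm_le_pi_norm w.2.1 j
      rw [Real.norm_eq_abs] at this
      rw [hBy]
      linarith [hy j]
    have hl : |z.2.2.2| ≤ Bl := by
      have h1 : (z.2.2.2 - w.2.2.2) ^ 2 ≤ SS w z := lsq_le_SS w z
      have h2 : |z.2.2.2 - w.2.2.2| ≤ s2 := abs_le_of_sq_le (le_trans h1 hSS)
      have h5 : |z.2.2.2| ≤ |z.2.2.2 - w.2.2.2| + |w.2.2.2| := by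
        calc |z.2.2.2| = |z.2.2.2 - w.2.2.2 + w.2.2.2| := by ring_nf
          _ ≤ |z.2.2.2 - w.2.2.2| + |w.2.2.2| := abs_add_le _ _
      rw [hBl]; linarith
    have ht : |z.2.2.1| ≤ Bt := by
      have hsum : |∑ j, (z.1 j * w.2.1 j - z.2.1 j * w.1 j)|
          ≤ n * (Bx * ‖w.2.1‖ + By * ‖w.1‖) := by
        calc |∑ j, (z.1 j * w.2.1 j - z.2.1 j * w.1 j)|
            ≤ ∑ j, |z.1 j * w.2.1 j - z.2.1 j * w.1 j| := Finset.abs_sum_le_sum_abs _ _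
          _ ≤ ∑ _j : Fin n, (Bx * ‖w.2.1‖ + By * ‖w.1‖) := by
              apply Finset.sum_le_sum
              intro j _
              have e1 : |z.1 j * w.2.1 j| ≤ Bx * ‖w.2.1‖ := by
                rw [abs_mul]
                apply mul_le_mul (hxj j) ?_ (abs_nonneg _) hBxnn
                have := norm_le_pi_norm w.2.1 j
                rwa [Real.norm_eq_abs] at this
              have e2 : |z.2.1 j * w.1 j| ≤ By * ‖w.1‖ := by
                rw [abs_mul]
                apply mul_le_mul (hyj j) ?_ (abs_nonneg _) hBynn
                have := norm_le_pi_norm w.1 j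
                rwa [Real.norm_eq_abs] at this
              calc |z.1 j * w.2.1 j - z.2.1 j * w.1 j|
                  ≤ |z.1 j * w.2.1 j| + |z.2.1 j * w.1 j| := abs_sub _ _
                _ ≤ Bx * ‖w.2.1‖ + By * ‖w.1‖ := by linarith
          _ = n * (Bx * ‖w.2.1‖ + By * ‖w.1‖) := by
              rw [Finset.sum_const, Finset.card_univ, Fintype.card_fin, nsmul_eq_mul]
      have hTTd : z.2.2.1 = TT w z + w.2.2.1 + 2 * ∑ j, (z.1 j * w.2.1 j - z.2.1 j * w.1 j) := by
        unfold TT; ring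
      rw [hBt, hTTd]
      calc |TT w z + w.2.2.1 + 2 * ∑ j, (z.1 j * w.2.1 j - z.2.1 j * w.1 j)|
          ≤ |TT w z| + |w.2.2.1| + 2 * |∑ j, (z.1 j * w.2.1 j - z.2.1 j * w.1 j)| := by
            have := abs_add_le (TT w z + w.2.2.1) (2 * ∑ j, (z.1 j * w.2.1 j - z.2.1 j * w.1 j))
            have h7 := abs_add_le (TT w z) w.2.2.1
            rw [abs_mul] at this
            simp only [abs_two] at this
            linarith
        _ ≤ s1 + |w.2.2.1| + 2 * (n * (Bx * ‖w.2.1‖ + By * ‖w.1‖)) := by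
            linarith [hsum, hTT]
        _ = s1 + |w.2.2.1| + 2 * n * (Bx * ‖w.2.1‖ + By * ‖w.1‖) := by ring
    -- assemble the norm bound
    have hnx : ‖z.1‖ ≤ Bx := by
      apply pi_norm_le_iff_of_nonneg hBxnn |>.2
      intro j
      rw [Real.norm_eq_abs]
      exact hxj j
    have hny : ‖z.2.1‖ ≤ By := by
      apply pi_norm_le_iff_of_nonneg hBynn |>.2
      intro j
      rw [Real.norm_eq_abs]
      exact hyj j
    have : ‖z‖ = max ‖z.1‖ (max ‖z.2.1‖ (max ‖z.2.2.1‖ ‖z.2.2.2‖)) := by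
      rw [Prod.norm_def, Prod.norm_def, Prod.norm_def]
    rw [this]
    rw [Real.norm_eq_abs, Real.norm_eq_abs]
    apply max_le_max hnx
    apply max_le_max hny
    exact max_le_max ht hl
  exact Metric.isCompact_of_isClosed_isBounded hclosed hbounded
/-! ### Choice of the barrier parameter `α` -/

lemma alpha_exists (w : Pt n) (R κ : ℝ) (hR : 0 < R) :
    ∃ α : ℝ, 0 < α ∧ ∀ z : Pt n, (R / 2) ^ 4 ≤ FF w z → FF w z ≤ R ^ 4 →
      LF w z + 8 * κ ^ 2 * R ^ 2 * SS w z ≤ α * Gam w z := by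
  rcases eq_or_ne w.2.2.2 0 with hcl | hcl
  · -- center on the hyperplane `λ = 0` : use the exact identities
    refine ⟨(8 * n + 20 + 8 * κ ^ 2 * R ^ 2) / R ^ 4 + 1, by positivity, ?_⟩
    intro z h1 h2
    have hl : z.2.2.2 - w.2.2.2 = z.2.2.2 := by rw [hcl, sub_zero]
    have hS : SS w z = uu w z + z.2.2.2 ^ 2 := by rw [SS_eq_uu, hl]
    have hGam : Gam w z = 16 * FF w z * SS w z := by
      unfold Gam
      rw [hl]
      have hFF : FF w z = SS w z ^ 2 + TT w z ^ 2 := rfl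
      rw [hFF, hS]
      ring
    have hLF : LF w z + 8 * κ ^ 2 * R ^ 2 * SS w z
        = (8 * n + 20 + 8 * κ ^ 2 * R ^ 2) * SS w z := by
      unfold LF
      rw [hl, hS]
      ring
    rw [hGam, hLF]
    set c : ℝ := 8 * n + 20 + 8 * κ ^ 2 * R ^ 2 with hc
    have hcnn : 0 ≤ c := by positivity
    have hαR : (c / R ^ 4 + 1) * R ^ 4 = c + R ^ 4 := by
      field_simp
    have hSnn := SS_nonneg w z
    have hR4 : (0:ℝ) < R ^ 4 := by positivity
    have h16 : R ^ 4 ≤ 16 * FF w z := by nlinarith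
    have hαpos : (0:ℝ) < c / R ^ 4 + 1 := by positivity
    calc c * SS w z ≤ (c + R ^ 4) * SS w z := by nlinarith
      _ = (c / R ^ 4 + 1) * R ^ 4 * SS w z := by rw [hαR]
      _ ≤ (c / R ^ 4 + 1) * (16 * FF w z * SS w z) := by
          rw [mul_assoc]
          exact mul_le_mul_of_nonneg_left (mul_le_mul_of_nonneg_right h16 hSnn) hαpos.le
  · -- center off the hyperplane: compactness
    set Kan : Set (Pt n) := {z | (R / 2) ^ 4 ≤ FF w z ∧ FF w z ≤ R ^ 4} with hKan
    have hKcl : IsClosed Kan := by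
      apply IsClosed.inter
      · exact isClosed_le continuous_const (continuous_FF w)
      · exact isClosed_le (continuous_FF w) continuous_const
    have hKcomp : IsCompact Kan :=
      (isCompact_FF_le w (R ^ 4) (by positivity)).of_isClosed_subset hKcl
        (fun z hz => hz.2)
    rcases Set.eq_empty_or_nonempty Kan with hem | hne
    · refine ⟨1, one_pos, ?_⟩
      intro z h1 h2
      have hmem : z ∈ Kan := ⟨h1, h2⟩
      rw [hem] at hmem
      exact absurd hmem (Set.notMem_empty z)
    obtain ⟨zm, hzm, hmin⟩ := hKcomp.exists_isMinOn hne (continuous_Gam w).continuousOn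
    have hγ : 0 < Gam w zm := Gam_pos hR hcl hzm.1
    set γ := Gam w zm with hγdef
    set Cb : ℝ := 16 * R ^ 2 + (8 * n + 4) * R ^ 2 + 8 * R ^ 2 + 16 * R ^ 2
        + 16 * w.2.2.2 ^ 2 + 8 * κ ^ 2 * R ^ 2 * R ^ 2 with hCb
    refine ⟨Cb / γ + 1, by positivity, ?_⟩
    intro z h1 h2
    have hzK : z ∈ Kan := ⟨h1, h2⟩
    have hγle : γ ≤ Gam w z := hmin hzK
    have hLFle : LF w z + 8 * κ ^ 2 * R ^ 2 * SS w z ≤ Cb := by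
      have b1 : uu w z ≤ R ^ 2 := le_trans (uu_le_SS w z) (SS_le_sq hR h2)
      have b2 : SS w z ≤ R ^ 2 := SS_le_sq hR h2
      have b3 : (z.2.2.2 - w.2.2.2) ^ 2 ≤ R ^ 2 := le_trans (lsq_le_SS w z) b2
      have b4 : z.2.2.2 ^ 2 ≤ 2 * R ^ 2 + 2 * w.2.2.2 ^ 2 := by
        nlinarith [sq_nonneg (z.2.2.2 - 2 * w.2.2.2)]
      have c1 : (8 * (n:ℝ) + 4) * SS w z ≤ (8 * n + 4) * R ^ 2 :=
        mul_le_mul_of_nonneg_left b2 (by positivity)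
      have c2 : 8 * κ ^ 2 * R ^ 2 * SS w z ≤ 8 * κ ^ 2 * R ^ 2 * R ^ 2 :=
        mul_le_mul_of_nonneg_left b2 (by positivity)
      unfold LF
      rw [hCb]
      linarith
    have hCbnn : 0 ≤ Cb := by rw [hCb]; positivity
    calc LF w z + 8 * κ ^ 2 * R ^ 2 * SS w z ≤ Cb := hLFle
      _ = (Cb / γ) * γ := by field_simp
      _ ≤ (Cb / γ + 1) * γ := by nlinarith
      _ ≤ (Cb / γ + 1) * Gam w z := by nlinarith [div_nonneg hCbnn hγ.le]

/-! ### The barrier inequality -/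

lemma barrier_ineq (w : Pt n) (R M κ α K : ℝ) (hR : 0 < R) (hM : 0 ≤ M)
    (hκ : κ = Real.sqrt (M + 1)) (hα : 0 < α)
    (hαcond : ∀ z : Pt n, (R / 2) ^ 4 ≤ FF w z → FF w z ≤ R ^ 4 →
      LF w z + 8 * κ ^ 2 * R ^ 2 * SS w z ≤ α * Gam w z)
    (hK : K = Real.exp (-(α * R ^ 4)))
    (z : Pt n) (h1 : (R / 2) ^ 4 < FF w z) (h2 : FF w z < R ^ 4) :
    M * bar w κ α K z < Lop (bar w κ α K) z := by
  have hκ2 : κ ^ 2 = M + 1 := by rw [hκ]; exact Real.sq_sqrt (by linarith)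
  have hκnn : 0 ≤ κ := by rw [hκ]; exact Real.sqrt_nonneg _
  rw [lop_bar]
  have hGamd : 16 * (uu w z * FF w z + SS w z ^ 2 * (z.2.2.2 - w.2.2.2) ^ 2
      + z.2.2.2 ^ 2 * TT w z ^ 2) = Gam w z := rfl
  have hLFd : 16 * uu w z + (8 * n + 4) * SS w z + 8 * (z.2.2.2 - w.2.2.2) ^ 2
      + 8 * z.2.2.2 ^ 2 = LF w z := rfl
  rw [hGamd, hLFd]
  unfold bar
  set l := z.2.2.2 - w.2.2.2 with hl
  set S := SS w z with hS
  set F := FF w z with hF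
  set E := Real.exp (-(α * F)) with hE
  have hEpos : 0 < E := Real.exp_pos _
  have hch : 1 ≤ Real.cosh (κ * l) := Real.one_le_cosh _
  have hchpos : 0 < Real.cosh (κ * l) := lt_of_lt_of_le one_pos hch
  have hEK : 0 < E - K := by
    rw [hE, hK]
    have : -(α * F) > -(α * R ^ 4) := by nlinarith
    nlinarith [Real.exp_lt_exp.2 this]
  have hSnn : 0 ≤ S := SS_nonneg w z
  have hl2S : l ^ 2 ≤ S := lsq_le_SS w z
  have hSR : S ≤ R ^ 2 := SS_le_sq hR h2.le
  -- the sinh term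
  have t4 : (0:ℝ) ≤ 8 * α * S * E := by positivity
  have hlR : l ^ 2 ≤ R ^ 2 := le_trans hl2S hSR
  have t1 : (κ * l) * Real.sinh (κ * l) ≤ (κ * l) ^ 2 * Real.cosh (κ * l) :=
    self_sinh_le (κ * l)
  have t2 : κ ^ 2 * l ^ 2 * Real.cosh (κ * l) ≤ κ ^ 2 * R ^ 2 * Real.cosh (κ * l) :=
    mul_le_mul_of_nonneg_right (mul_le_mul_of_nonneg_left hlR (sq_nonneg κ)) hchpos.le
  have t3 : κ * l * Real.sinh (κ * l) ≤ κ ^ 2 * R ^ 2 * Real.cosh (κ * l) := by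
    have e : (κ * l) ^ 2 * Real.cosh (κ * l) = κ ^ 2 * l ^ 2 * Real.cosh (κ * l) := by ring
    linarith [t1, t2, e.le, e.ge]
  have hsinh : 8 * α * κ * S * l * Real.sinh (κ * l) * E
      ≤ 8 * α * κ ^ 2 * S * R ^ 2 * Real.cosh (κ * l) * E := by
    calc 8 * α * κ * S * l * Real.sinh (κ * l) * E
        = (8 * α * S * E) * (κ * l * Real.sinh (κ * l)) := by ring
      _ ≤ (8 * α * S * E) * (κ ^ 2 * R ^ 2 * Real.cosh (κ * l)) :=
          mul_le_mul_of_nonneg_left t3 t4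
      _ = 8 * α * κ ^ 2 * S * R ^ 2 * Real.cosh (κ * l) * E := by ring
  -- the main term
  have k1 : LF w z + 8 * κ ^ 2 * R ^ 2 * S ≤ α * Gam w z := hαcond z h1.le h2.le
  have k2 : α * (LF w z + 8 * κ ^ 2 * R ^ 2 * S) ≤ α * (α * Gam w z) :=
    mul_le_mul_of_nonneg_left k1 hα.le
  have k2' : α * (8 * κ ^ 2 * R ^ 2 * S) ≤ α ^ 2 * Gam w z - α * LF w z := by nlinarith [k2]
  have hchE : (0:ℝ) ≤ Real.cosh (κ * l) * E := by positivity
  have k3 := mul_le_mul_of_nonneg_left k2' hchE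
  have hmain : 0 ≤ Real.cosh (κ * l) * (E * (α ^ 2 * Gam w z - α * LF w z))
      - 8 * α * κ * S * l * Real.sinh (κ * l) * E := by
    have e1 : 8 * α * κ ^ 2 * S * R ^ 2 * Real.cosh (κ * l) * E
        = Real.cosh (κ * l) * E * (α * (8 * κ ^ 2 * R ^ 2 * S)) := by ring
    have e2 : Real.cosh (κ * l) * E * (α ^ 2 * Gam w z - α * LF w z)
        = Real.cosh (κ * l) * (E * (α ^ 2 * Gam w z - α * LF w z)) := by ring
    linarith [hsinh, k3, e1.le, e1.ge, e2.le, e2.ge]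
  have e3 : κ ^ 2 * Real.cosh (κ * l) * (E - K)
      = M * (Real.cosh (κ * l) * (E - K)) + Real.cosh (κ * l) * (E - K) := by
    rw [hκ2]; ring
  linarith [hmain, mul_pos hchpos hEK, e3.le, e3.ge]
/-! ### Linearity of `Lop` -/

lemma Hq_sub {g : Pt n → ℝ} (hf : ContDiffAt ℝ 2 f z) (hg : ContDiffAt ℝ 2 g z) (ε : ℝ)
    (v : Pt n) :
    Hq (fun p => f p - ε * g p) z v = Hq f z v - ε * Hq g z v := by
  obtain ⟨Of, hOfo, hzf, hcdf⟩ := contDiffAt_open hf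
  obtain ⟨Og, hOgo, hzg, hcdg⟩ := contDiffAt_open hg
  have hev : (fun p => fderiv ℝ (fun q => f q - ε * g q) p v)
      =ᶠ[𝓝 z] fun p => fderiv ℝ f p v - ε * fderiv ℝ g p v := by
    apply eventuallyEq_of_mem ((hOfo.inter hOgo).mem_nhds ⟨hzf, hzg⟩)
    intro p hp
    have hfd := diffAt_of_open hOfo hcdf p hp.1
    have hgd := diffAt_of_open hOgo hcdg p hp.2
    have hrw : fderiv ℝ (fun q => f q - ε * g q) p
        = fderiv ℝ f p - ε • fderiv ℝ g p := by
      rw [fderiv_fun_sub hfd (hgd.const_mul ε), fderiv_const_mul hgd ε]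
    simp [hrw]
  unfold Hq sndD
  rw [hev.fderiv_eq, fderiv_fun_sub (diffAt_fderiv_apply hf v)
    ((diffAt_fderiv_apply hg v).const_mul ε),
    fderiv_const_mul (diffAt_fderiv_apply hg v) ε]
  simp

lemma Lop_sub {g : Pt n → ℝ} (hf : ContDiffAt ℝ 2 f z) (hg : ContDiffAt ℝ 2 g z) (ε : ℝ) :
    Lop (fun p => f p - ε * g p) z = Lop f z - ε * Lop g z := by
  have hfg : ContDiffAt ℝ 2 (fun p => f p - ε * g p) z := hf.sub (contDiffAt_const.mul hg)
  rw [lop_rep hfg, lop_rep hf, lop_rep hg]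
  have hsum : (∑ j, (Hq (fun p => f p - ε * g p) z (eX j + (2 * z.2.1 j) • eT)
        + Hq (fun p => f p - ε * g p) z (eY j + (-(2 * z.1 j)) • eT)))
      = ∑ j, ((Hq f z (eX j + (2 * z.2.1 j) • eT) - ε * Hq g z (eX j + (2 * z.2.1 j) • eT))
        + (Hq f z (eY j + (-(2 * z.1 j)) • eT) - ε * Hq g z (eY j + (-(2 * z.1 j)) • eT))) :=
    Finset.sum_congr rfl fun j _ => by rw [Hq_sub hf hg ε, Hq_sub hf hg ε]
  rw [hsum, Hq_sub hf hg ε, Hq_sub hf hg ε]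
  have e : (∑ j, ((Hq f z (eX j + (2 * z.2.1 j) • eT) - ε * Hq g z (eX j + (2 * z.2.1 j) • eT))
        + (Hq f z (eY j + (-(2 * z.1 j)) • eT) - ε * Hq g z (eY j + (-(2 * z.1 j)) • eT))))
      = (∑ j, (Hq f z (eX j + (2 * z.2.1 j) • eT) + Hq f z (eY j + (-(2 * z.1 j)) • eT)))
        - ε * (∑ j, (Hq g z (eX j + (2 * z.2.1 j) • eT)
          + Hq g z (eY j + (-(2 * z.1 j)) • eT))) := by
    rw [Finset.mul_sum, ← Finset.sum_sub_distrib]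
    exact Finset.sum_congr rfl fun j _ => by ring
  rw [e]
  ring

/-! ### The comparison principle on the annulus -/

lemma comparison (V : Set (Pt n)) (hVopen : IsOpen V) (U : Pt n → ℝ)
    (hU2 : ContDiffOn ℝ 2 U V) (hUc : ContinuousOn U (closure V))
    (hU0 : ∀ p ∈ closure V, 0 ≤ U p)
    (w : Pt n) (R M κ α K ε : ℝ) (hR : 0 < R) (hM : 0 ≤ M) (hε : 0 ≤ ε)
    (hball : {p : Pt n | FF w p < R ^ 4} ⊆ V)
    (hclosure : {p : Pt n | FF w p ≤ R ^ 4} ⊆ closure V)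
    (hineqM : ∀ p ∈ V, Lop U p ≤ M * U p)
    (hκ : κ = Real.sqrt (M + 1)) (hα : 0 < α)
    (hαcond : ∀ p : Pt n, (R / 2) ^ 4 ≤ FF w p → FF w p ≤ R ^ 4 →
      LF w p + 8 * κ ^ 2 * R ^ 2 * SS w p ≤ α * Gam w p)
    (hK : K = Real.exp (-(α * R ^ 4)))
    (hbound : ∀ p : Pt n, FF w p = (R / 2) ^ 4 → ε * bar w κ α K p ≤ U p) :
    ∀ p : Pt n, (R / 2) ^ 4 ≤ FF w p → FF w p ≤ R ^ 4 → ε * bar w κ α K p ≤ U p := by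
  intro z hz1 hz2
  set cW : Pt n → ℝ := fun p => U p - ε * bar w κ α K p with hcW
  set Kan : Set (Pt n) := {p | (R / 2) ^ 4 ≤ FF w p ∧ FF w p ≤ R ^ 4} with hKan
  have hKsub : Kan ⊆ closure V := fun p hp => hclosure hp.2
  have hKcl : IsClosed Kan :=
    (isClosed_le continuous_const (continuous_FF w)).inter
      (isClosed_le (continuous_FF w) continuous_const)
  have hKcomp : IsCompact Kan :=
    (isCompact_FF_le w (R ^ 4) (by positivity)).of_isClosed_subset hKcl (fun p hp => hp.2)
  have hWcont : ContinuousOn cW Kan := by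
    apply ContinuousOn.sub (hUc.mono hKsub)
    exact (continuous_const.mul (contDiff_bar w κ α K).continuous).continuousOn
  obtain ⟨zm, hzm, hmin⟩ := hKcomp.exists_isMinOn ⟨z, hz1, hz2⟩ hWcont
  by_cases hw : 0 ≤ cW zm
  · have h := hmin (show z ∈ Kan from ⟨hz1, hz2⟩)
    have : cW zm ≤ cW z := h
    simp only [hcW] at this hw
    linarith
  push_neg at hw
  exfalso
  have hzmcl : zm ∈ closure V := hKsub hzm
  rcases eq_or_lt_of_le hε with hε0 | hεpos
  · have := hU0 zm hzmcl
    simp only [hcW, ← hε0] at hw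
    linarith
  have hzm1 : (R / 2) ^ 4 < FF w zm := by
    rcases eq_or_lt_of_le hzm.1 with h | h
    · exfalso
      have := hbound zm h.symm
      simp only [hcW] at hw
      linarith
    · exact h
  have hzm2 : FF w zm < R ^ 4 := by
    rcases eq_or_lt_of_le hzm.2 with h | h
    · exfalso
      have hbar0 : bar w κ α K zm = 0 := by
        unfold bar
        rw [h, hK, sub_self, mul_zero]
      have hU0' : 0 ≤ U zm := hU0 zm hzmcl
      simp only [hcW] at hw
      rw [hbar0] at hw
      linarith
    · exact h
  have hzmV : zm ∈ V := hball hzm2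
  have hUcd : ContDiffAt ℝ 2 U zm := hU2.contDiffAt (hVopen.mem_nhds hzmV)
  have hbcd : ContDiffAt ℝ 2 (bar w κ α K) zm := (contDiff_bar w κ α K).contDiffAt
  have hWcd : ContDiffAt ℝ 2 cW zm := hUcd.sub (contDiffAt_const.mul hbcd)
  have hopen : IsOpen {p : Pt n | (R / 2) ^ 4 < FF w p ∧ FF w p < R ^ 4} :=
    (isOpen_lt continuous_const (continuous_FF w)).inter
      (isOpen_lt (continuous_FF w) continuous_const)
  have hlocmin : IsLocalMin cW zm := by
    have hnb : {p : Pt n | (R / 2) ^ 4 < FF w p ∧ FF w p < R ^ 4} ∈ 𝓝 zm :=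
      hopen.mem_nhds ⟨hzm1, hzm2⟩
    exact Filter.eventually_of_mem hnb (fun p hp => hmin ⟨hp.1.le, hp.2.le⟩)
  have hpos : 0 ≤ Lop cW zm := by
    rw [lop_rep hWcd]
    refine add_nonneg (add_nonneg (Finset.sum_nonneg fun j _ =>
      add_nonneg (isLocalMin_Hq_nonneg hWcd hlocmin _) (isLocalMin_Hq_nonneg hWcd hlocmin _))
      (isLocalMin_Hq_nonneg hWcd hlocmin _)) (isLocalMin_Hq_nonneg hWcd hlocmin _)
  have hLopW : Lop cW zm = Lop U zm - ε * Lop (bar w κ α K) zm := by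
    rw [hcW]
    exact Lop_sub hUcd hbcd ε
  have hLU : Lop U zm ≤ M * U zm := hineqM zm hzmV
  have hbar : M * bar w κ α K zm < Lop (bar w κ α K) zm :=
    barrier_ineq w R M κ α K hR hM hκ hα hαcond hK zm hzm1 hzm2
  have h5 : ε * (M * bar w κ α K zm) < ε * Lop (bar w κ α K) zm :=
    mul_lt_mul_of_pos_left hbar hεpos
  have e : M * U zm - ε * (M * bar w κ α K zm) = M * cW zm := by
    simp only [hcW]
    ring
  have h6 : M * cW zm ≤ 0 := mul_nonpos_iff.2 (Or.inl ⟨hM, hw.le⟩)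
  linarith [hpos, hLopW.le, hLopW.ge, hLU, h5, e.le, e.ge, h6]
/-! ### The Euclidean gradient of the gauge quartic -/

lemma gq_fun_eq (w : Pt n) : gaugeQuartic w = FF w := funext (gaugeQuartic_eq w)

lemma aS_eX (w z : Pt n) (j : Fin n) : aS w z (eX j) = 2 * (z.1 j - w.1 j) := by
  have := aS_dirX w z j 0
  simpa using this

lemma aT_eX (w : Pt n) (j : Fin n) : aT w (eX j) = -(2 * w.2.1 j) := by
  have := aT_dirX w j 0
  simp at this
  simpa using this

lemma aS_eY (w z : Pt n) (j : Fin n) : aS w z (eY j) = 2 * (z.2.1 j - w.2.1 j) := by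
  have := aS_dirY w z j 0
  simpa using this

lemma aT_eY (w : Pt n) (j : Fin n) : aT w (eY j) = 2 * w.1 j := by
  have := aT_dirY w j 0
  simpa using this

lemma aS_eT (w z : Pt n) : aS w z eT = 0 := by
  have := aS_dirT w z 1
  simpa using this

lemma aT_eT (w : Pt n) : aT w (eT : Pt n) = 1 := by
  have := aT_dirT w 1
  simpa using this

lemma fderiv_FF_apply (w z v : Pt n) :
    fderiv ℝ (FF w) z v = 2 * SS w z * aS w z v + 2 * TT w z * aT w v := by
  have hd : DifferentiableAt ℝ (FF w) z :=
    ((contDiff_FF w).differentiable two_ne_zero).differentiableAt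
  have hd' : HasFDerivAt (FF w) (fderiv ℝ (FF w) z) (z + (0:ℝ) • v) := by
    simpa using hd.hasFDerivAt
  have h1 : HasDerivAt (fun s : ℝ => FF w (z + s • v)) (fderiv ℝ (FF w) z v) 0 :=
    by have := hd'.comp_hasDerivAt 0 (line_hasDerivAt' z v 0); exact this
  have h2 : HasDerivAt (fun s : ℝ => FF w (z + s • v))
      (2 * SS w z * aS w z v + 2 * TT w z * aT w v) 0 := by
    have hfun : (fun s : ℝ => FF w (z + s • v))
        = A1 (SS w z) (aS w z v) (bS v) (TT w z) (aT w v) := by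
      funext s
      unfold FF A1
      rw [SS_line, TT_line]
    rw [hfun]
    have := A1_hasDeriv (SS w z) (aS w z v) (bS v) (TT w z) (aT w v) 0
    convert this using 1
    unfold A1'
    norm_num
  exact h1.unique h2

lemma pX_FF (w z : Pt n) (j : Fin n) :
    pX j (FF w) z = 4 * SS w z * (z.1 j - w.1 j) - 4 * TT w z * w.2.1 j := by
  rw [pX_eq j ((contDiff_FF w).differentiable two_ne_zero).differentiableAt,
    fderiv_FF_apply, aS_eX, aT_eX]
  ring

lemma pY_FF (w z : Pt n) (j : Fin n) :
    pY j (FF w) z = 4 * SS w z * (z.2.1 j - w.2.1 j) + 4 * TT w z * w.1 j := by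
  rw [pY_eq j ((contDiff_FF w).differentiable two_ne_zero).differentiableAt,
    fderiv_FF_apply, aS_eY, aT_eY]
  ring

lemma pT_FF (w z : Pt n) : pT (FF w) z = 2 * TT w z := by
  rw [pT_eq ((contDiff_FF w).differentiable two_ne_zero).differentiableAt,
    fderiv_FF_apply, aS_eT, aT_eT]
  ring

lemma pL_FF (w z : Pt n) : pL (FF w) z = 4 * SS w z * (z.2.2.2 - w.2.2.2) := by
  rw [pL_eq ((contDiff_FF w).differentiable two_ne_zero).differentiableAt,
    fderiv_FF_apply, aS_dirL, aT_dirL]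
  ring

lemma egrad_gq (w z : Pt n) :
    egrad (gaugeQuartic w) z
      = (fun j => 4 * SS w z * (z.1 j - w.1 j) - 4 * TT w z * w.2.1 j,
         fun j => 4 * SS w z * (z.2.1 j - w.2.1 j) + 4 * TT w z * w.1 j,
         2 * TT w z, 4 * SS w z * (z.2.2.2 - w.2.2.2)) := by
  rw [egrad, gq_fun_eq]
  refine Prod.ext ?_ (Prod.ext ?_ (Prod.ext ?_ ?_))
  · funext j; exact pX_FF w z j
  · funext j; exact pY_FF w z j
  · exact pT_FF w z
  · exact pL_FF w z

lemma dotP_grad (w z v : Pt n) :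
    dotP (egrad (gaugeQuartic w) z) v = 2 * SS w z * aS w z v + 2 * TT w z * aT w v := by
  rw [egrad_gq]
  unfold dotP
  have e1 : (∑ j, (4 * SS w z * (z.1 j - w.1 j) - 4 * TT w z * w.2.1 j) * v.1 j)
      = 4 * SS w z * (∑ j, (z.1 j - w.1 j) * v.1 j)
        - 4 * TT w z * (∑ j, v.1 j * w.2.1 j) := by
    rw [Finset.mul_sum, Finset.mul_sum, ← Finset.sum_sub_distrib]
    exact Finset.sum_congr rfl fun j _ => by ring
  have e2 : (∑ j, (4 * SS w z * (z.2.1 j - w.2.1 j) + 4 * TT w z * w.1 j) * v.2.1 j)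
      = 4 * SS w z * (∑ j, (z.2.1 j - w.2.1 j) * v.2.1 j)
        + 4 * TT w z * (∑ j, v.2.1 j * w.1 j) := by
    rw [Finset.mul_sum, Finset.mul_sum, ← Finset.sum_add_distrib]
    exact Finset.sum_congr rfl fun j _ => by ring
  have e3 : (∑ j, (v.1 j * w.2.1 j - v.2.1 j * w.1 j))
      = (∑ j, v.1 j * w.2.1 j) - (∑ j, v.2.1 j * w.1 j) := Finset.sum_sub_distrib _ _
  rw [e1, e2]
  unfold aS aT
  rw [e3]
  ring

lemma dot_grad_pos (w z : Pt n) {R : ℝ} (hR : 0 < R) (hFF : FF w z = R ^ 4) :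
    0 < dotP (egrad (gaugeQuartic w) z) (egrad (gaugeQuartic w) z) := by
  rw [egrad_gq]
  unfold dotP
  dsimp only
  have hs1 : (0:ℝ) ≤ ∑ j, (4 * SS w z * (z.1 j - w.1 j) - 4 * TT w z * w.2.1 j)
      * (4 * SS w z * (z.1 j - w.1 j) - 4 * TT w z * w.2.1 j) :=
    Finset.sum_nonneg fun j _ => mul_self_nonneg _
  have hs2 : (0:ℝ) ≤ ∑ j, (4 * SS w z * (z.2.1 j - w.2.1 j) + 4 * TT w z * w.1 j)
      * (4 * SS w z * (z.2.1 j - w.2.1 j) + 4 * TT w z * w.1 j) :=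
    Finset.sum_nonneg fun j _ => mul_self_nonneg _
  rcases eq_or_ne (TT w z) 0 with hT | hT
  · -- characteristic case: the t-component vanishes but the full gradient does not
    have hS2 : SS w z ^ 2 = R ^ 4 := by
      have : FF w z = SS w z ^ 2 + TT w z ^ 2 := rfl
      rw [this, hT] at hFF
      nlinarith [hFF]
    have hSpos : 0 < SS w z := by
      rcases eq_or_lt_of_le (SS_nonneg w z) with h | h
      · exfalso; rw [← h] at hS2; nlinarith [pow_pos hR 4]
      · exact h
    rw [hT]
    simp only [mul_zero, zero_mul, sub_zero, add_zero, zero_add]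
    have e1 : (∑ j, (4 * SS w z * (z.1 j - w.1 j)) * (4 * SS w z * (z.1 j - w.1 j)))
        = 16 * SS w z ^ 2 * (∑ j, (z.1 j - w.1 j) ^ 2) := by
      rw [Finset.mul_sum]
      exact Finset.sum_congr rfl fun j _ => by ring
    have e2 : (∑ j, (4 * SS w z * (z.2.1 j - w.2.1 j)) * (4 * SS w z * (z.2.1 j - w.2.1 j)))
        = 16 * SS w z ^ 2 * (∑ j, (z.2.1 j - w.2.1 j) ^ 2) := by
      rw [Finset.mul_sum]
      exact Finset.sum_congr rfl fun j _ => by ring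
    rw [e1, e2]
    have hSS : (∑ j, (z.1 j - w.1 j) ^ 2) + (∑ j, (z.2.1 j - w.2.1 j) ^ 2)
        + (z.2.2.2 - w.2.2.2) ^ 2 = SS w z := rfl
    have : 16 * SS w z ^ 2 * (∑ j, (z.1 j - w.1 j) ^ 2)
        + 16 * SS w z ^ 2 * (∑ j, (z.2.1 j - w.2.1 j) ^ 2)
        + 4 * SS w z * (z.2.2.2 - w.2.2.2) * (4 * SS w z * (z.2.2.2 - w.2.2.2))
        = 16 * SS w z ^ 2 * SS w z := by
      rw [← hSS]
      ring
    rw [this]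
    exact mul_pos (mul_pos (by norm_num : (0:ℝ) < 16) (pow_pos hSpos 2)) hSpos
  · have ht : 0 < 2 * TT w z * (2 * TT w z) :=
      mul_self_pos.2 (mul_ne_zero two_ne_zero hT)
    nlinarith [mul_self_nonneg (4 * SS w z * (z.2.2.2 - w.2.2.2))]

/-! ### One-sided difference quotients -/

lemma quot_tendsto {f : Pt n → ℝ} {x wv : Pt n} {S : Set (Pt n)} {f' : Pt n →L[ℝ] ℝ}
    (hd : HasFDerivWithinAt f f' S x) (hmem : ∀ᶠ s in 𝓝[>] (0:ℝ), x + s • wv ∈ S) :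
    Filter.Tendsto (fun s : ℝ => (f (x + s • wv) - f x) / s) (𝓝[>] (0:ℝ)) (𝓝 (f' wv)) := by
  have hcont : Filter.Tendsto (fun s : ℝ => x + s • wv) (𝓝[>] (0:ℝ)) (𝓝[S] x) := by
    rw [tendsto_nhdsWithin_iff]
    constructor
    · have hc : Continuous (fun s : ℝ => x + s • wv) := by fun_prop
      have h0 := hc.tendsto 0
      simp only [zero_smul, add_zero] at h0
      exact h0.mono_left nhdsWithin_le_nhds
    · exact hmem
  have h1 := hd.isLittleO.comp_tendsto hcont
  have h2 : ((fun x' => f x' - f x - f' (x' - x)) ∘ fun s : ℝ => x + s • wv)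
      = fun s : ℝ => f (x + s • wv) - f x - s * f' wv := by
    funext s
    simp only [Function.comp]
    rw [show x + s • wv - x = s • wv by abel, _root_.map_smul]
    simp
  have h3 : ((fun x' : Pt n => x' - x) ∘ fun s : ℝ => x + s • wv) = fun s : ℝ => s • wv := by
    funext s
    simp only [Function.comp]
    abel
  rw [h2, h3] at h1
  have h4 : (fun s : ℝ => s • wv) =O[𝓝[>] (0:ℝ)] fun s : ℝ => s := by
    apply Asymptotics.isBigO_of_le' (c := ‖wv‖)
    intro s
    have he : ‖s • wv‖ = ‖wv‖ * ‖s‖ := by rw [norm_smul]; ring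
    exact he.le
  have h5 := (h1.trans_isBigO h4).tendsto_div_nhds_zero
  have h6 : ∀ᶠ s in 𝓝[>] (0:ℝ),
      (f (x + s • wv) - f x - s * f' wv) / s + f' wv = (f (x + s • wv) - f x) / s := by
    filter_upwards [self_mem_nhdsWithin] with s hs
    have hs0 : s ≠ 0 := ne_of_gt hs
    field_simp
    ring
  have h7 := h5.add (tendsto_const_nhds (x := f' wv))
  rw [zero_add] at h7
  exact Filter.Tendsto.congr' h6 h7
/-! ### Gauge balls concretely -/

lemma gdist_eq (w z : Pt n) : gdist z w = (FF w z) ^ ((1:ℝ)/4) := by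
  unfold gdist rho
  rw [show rSq (gmul (ginv w) z) ^ 2 + (gmul (ginv w) z).2.2.1 ^ 2 = gaugeQuartic w z from rfl,
    gaugeQuartic_eq]

lemma rpow_quarter_pow (x : ℝ) (hx : 0 ≤ x) : (x ^ ((1:ℝ)/4)) ^ (4:ℕ) = x := by
  rw [← Real.rpow_natCast (x ^ ((1:ℝ)/4)) 4, ← Real.rpow_mul hx]
  norm_num

lemma gBall_eq (w : Pt n) (R : ℝ) (hR : 0 < R) :
    gBall w R = {z : Pt n | FF w z < R ^ 4} := by
  ext z
  simp only [gBall, Set.mem_setOf_eq, gdist_eq]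
  constructor
  · intro h
    have h0 := FF_nonneg w z
    have h1 : ((FF w z) ^ ((1:ℝ)/4)) ^ (4:ℕ) < R ^ (4:ℕ) :=
      pow_lt_pow_left₀ h (Real.rpow_nonneg h0 _) (by norm_num)
    rwa [rpow_quarter_pow _ h0] at h1
  · intro h
    have h0 := FF_nonneg w z
    have h1 : (FF w z) ^ ((1:ℝ)/4) < (R ^ (4:ℕ)) ^ ((1:ℝ)/4) :=
      Real.rpow_lt_rpow h0 h (by norm_num)
    have h2 : ((R:ℝ) ^ (4:ℕ)) ^ ((1:ℝ)/4) = R := by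
      rw [← Real.rpow_natCast R 4, ← Real.rpow_mul hR.le]
      norm_num
    rwa [h2] at h1

lemma frontier_FF {w : Pt n} {R : ℝ} (hR : 0 < R) {P : Pt n}
    (hP : P ∈ frontier (gBall w R)) : FF w P = R ^ 4 := by
  rw [gBall_eq w R hR] at hP
  have hop : IsOpen {z : Pt n | FF w z < R ^ 4} :=
    isOpen_lt (continuous_FF w) continuous_const
  have h1 : P ∈ closure {z : Pt n | FF w z < R ^ 4} := hP.1
  have h2 : FF w P ≤ R ^ 4 := by
    have hcl : IsClosed {z : Pt n | FF w z ≤ R ^ 4} :=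
      isClosed_le (continuous_FF w) continuous_const
    have hsub := closure_mono (show {z : Pt n | FF w z < R ^ 4} ⊆ {z : Pt n | FF w z ≤ R ^ 4}
      from fun z hz => show FF w z ≤ R ^ 4 from le_of_lt hz)
    have hP2 := hsub h1
    rwa [hcl.closure_eq] at hP2
  have h3 : P ∉ {z : Pt n | FF w z < R ^ 4} := by
    intro hmem
    exact hP.2 (by rwa [hop.interior_eq])
  exact le_antisymm h2 (not_lt.1 h3)

lemma SS_gmul (w v : Pt n) : SS w (gmul w v) = rSq v := by
  unfold SS gmul rSq
  simp only [Pi.add_apply]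
  have e1 : (∑ j, (w.1 j + v.1 j - w.1 j) ^ 2) = ∑ j, v.1 j ^ 2 :=
    Finset.sum_congr rfl fun j _ => by ring
  have e2 : (∑ j, (w.2.1 j + v.2.1 j - w.2.1 j) ^ 2) = ∑ j, v.2.1 j ^ 2 :=
    Finset.sum_congr rfl fun j _ => by ring
  rw [e1, e2]
  ring

lemma TT_gmul (w v : Pt n) : TT w (gmul w v) = v.2.2.1 := by
  unfold TT gmul
  simp only [Pi.add_apply]
  have e1 : (∑ j, ((w.1 j + v.1 j) * w.2.1 j - (w.2.1 j + v.2.1 j) * w.1 j))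
      = ∑ j, (v.1 j * w.2.1 j - v.2.1 j * w.1 j) :=
    Finset.sum_congr rfl fun j _ => by ring
  rw [e1]
  ring

lemma gmul_ginv_cancel (w z : Pt n) : gmul w (gmul (ginv w) z) = z := by
  unfold gmul ginv
  refine Prod.ext ?_ (Prod.ext ?_ (Prod.ext ?_ ?_))
  · funext j; simp
  · funext j; simp
  · show w.2.2.1 + (-w.2.2.1 + z.2.2.1 + 2 * ∑ j, (z.1 j * (-w.2.1) j - z.2.1 j * (-w.1) j))
        + 2 * ∑ j, ((-w.1 + z.1) j * w.2.1 j - (-w.2.1 + z.2.1) j * w.1 j) = z.2.2.1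
    simp only [Pi.add_apply, Pi.neg_apply]
    have e1 : (∑ j, (z.1 j * (-w.2.1 j) - z.2.1 j * (-w.1 j)))
        = -(∑ j, (z.1 j * w.2.1 j - z.2.1 j * w.1 j)) := by
      rw [← Finset.sum_neg_distrib]
      exact Finset.sum_congr rfl fun j _ => by ring
    have e2 : (∑ j, ((-w.1 j + z.1 j) * w.2.1 j - (-w.2.1 j + z.2.1 j) * w.1 j))
        = ∑ j, (z.1 j * w.2.1 j - z.2.1 j * w.1 j) :=
      Finset.sum_congr rfl fun j _ => by ring
    rw [e1, e2]
    ring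
  · simp

/-- Heisenberg dilations. -/
def dil (r : ℝ) (v : Pt n) : Pt n := (r • v.1, r • v.2.1, r ^ 2 * v.2.2.1, r * v.2.2.2)

lemma rSq_dil (r : ℝ) (v : Pt n) : rSq (dil r v) = r ^ 2 * rSq v := by
  unfold rSq dil
  simp only [Pi.smul_apply, smul_eq_mul]
  have e1 : (∑ j, (r * v.1 j) ^ 2) = r ^ 2 * ∑ j, v.1 j ^ 2 := by
    rw [Finset.mul_sum]; exact Finset.sum_congr rfl fun j _ => by ring
  have e2 : (∑ j, (r * v.2.1 j) ^ 2) = r ^ 2 * ∑ j, v.2.1 j ^ 2 := by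
    rw [Finset.mul_sum]; exact Finset.sum_congr rfl fun j _ => by ring
  rw [e1, e2]
  ring

lemma FF_dil (w : Pt n) (z : Pt n) (r : ℝ) :
    FF w (gmul w (dil r (gmul (ginv w) z))) = r ^ 4 * FF w z := by
  have h1 : FF w (gmul w (dil r (gmul (ginv w) z)))
      = rSq (dil r (gmul (ginv w) z)) ^ 2 + (dil r (gmul (ginv w) z)).2.2.1 ^ 2 := by
    unfold FF
    rw [SS_gmul, TT_gmul]
  have h2 : FF w z = rSq (gmul (ginv w) z) ^ 2 + (gmul (ginv w) z).2.2.1 ^ 2 := by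
    conv_lhs => rw [← gmul_ginv_cancel w z]
    unfold FF
    rw [SS_gmul, TT_gmul]
  rw [h1, h2, rSq_dil]
  show (r ^ 2 * rSq (gmul (ginv w) z)) ^ 2 + (r ^ 2 * (gmul (ginv w) z).2.2.1) ^ 2 = _
  ring

lemma continuous_dil_path (w z : Pt n) :
    Continuous (fun r : ℝ => gmul w (dil r (gmul (ginv w) z))) := by
  unfold gmul dil ginv
  apply Continuous.prodMk
  · fun_prop
  apply Continuous.prodMk
  · fun_prop
  apply Continuous.prodMk
  · apply Continuous.add
    · fun_prop
    apply Continuous.mul continuous_const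
    apply continuous_finset_sum
    intro j _
    fun_prop
  · fun_prop

lemma le_subset_closure_lt (w : Pt n) (R : ℝ) (hR : 0 < R) :
    {z : Pt n | FF w z ≤ R ^ 4} ⊆ closure {z : Pt n | FF w z < R ^ 4} := by
  intro z hz
  have hzle : FF w z ≤ R ^ 4 := hz
  have hpath := continuous_dil_path w z
  have hend : gmul w (dil (1:ℝ) (gmul (ginv w) z)) = z := by
    have : dil (1:ℝ) (gmul (ginv w) z) = gmul (ginv w) z := by
      unfold dil
      refine Prod.ext ?_ (Prod.ext ?_ (Prod.ext ?_ ?_)) <;> simp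
    rw [this, gmul_ginv_cancel]
  have htend : Filter.Tendsto (fun r : ℝ => gmul w (dil r (gmul (ginv w) z)))
      (𝓝[<] (1:ℝ)) (𝓝 z) := by
    have := hpath.tendsto 1
    rw [hend] at this
    exact this.mono_left nhdsWithin_le_nhds
  apply mem_closure_of_tendsto htend
  have hIoo : Set.Ioo (0:ℝ) 1 ∈ 𝓝[<] (1:ℝ) :=
    Ioo_mem_nhdsLT_of_mem ⟨by norm_num, le_rfl⟩
  filter_upwards [hIoo] with r hr
  show FF w (gmul w (dil r (gmul (ginv w) z))) < R ^ 4
  rw [FF_dil]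
  have h1 : r ^ 4 < 1 := pow_lt_one₀ hr.1.le hr.2 (by norm_num)
  have h0 := FF_nonneg w z
  have hR4 : (0:ℝ) < R ^ 4 := by positivity
  have h2 : r ^ 4 * FF w z ≤ r ^ 4 * R ^ 4 :=
    mul_le_mul_of_nonneg_left hzle (pow_nonneg hr.1.le 4)
  have h3 : r ^ 4 * R ^ 4 < 1 * R ^ 4 := mul_lt_mul_of_pos_right h1 hR4
  linarith

lemma FF_self (w : Pt n) : FF w w = 0 := by
  unfold FF SS TT
  have e : (∑ j, (w.1 j * w.2.1 j - w.2.1 j * w.1 j)) = 0 :=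
    Finset.sum_eq_zero fun j _ => by ring
  simp [e]

lemma fderiv_bar_apply (w : Pt n) (κ α K : ℝ) (z v : Pt n) :
    fderiv ℝ (bar w κ α K) z v
      = κ * v.2.2.2 * Real.sinh (κ * (z.2.2.2 - w.2.2.2)) * (Real.exp (-(α * FF w z)) - K)
        + Real.cosh (κ * (z.2.2.2 - w.2.2.2)) * (Real.exp (-(α * FF w z))
          * (-(α * (2 * SS w z * aS w z v + 2 * TT w z * aT w v)))) := by
  have h := fderiv_bar_line w κ α K z v 0
  simp only [zero_smul, add_zero] at h
  rw [h]
  unfold Gg' A1 A1' FF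
  norm_num
end HopfAux

/-- Lemma 4.3, Hopf's Lemma for `ℒ`: interior gauge-ball condition at
`P₀ ∈ ∂𝒱`, `-ℒU ≥ c₁ U` in `𝒱` with `c₁ ∈ L^∞`, and `U(z) > U(P₀) = 0` in `𝒱` imply
that the one-sided normal difference quotient has a negative limit. -/
theorem hopf_lemma (n : ℕ) (V : Set (Pt n)) (hVopen : IsOpen V)
    (P₀ z₀ : Pt n) (R : ℝ) (hR : 0 < R)
    (hz₀ : z₀ ∈ V) (hball : gBall z₀ R ⊆ V) (hP₀ : P₀ ∈ frontier (gBall z₀ R))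
    (hP₀V : P₀ ∈ frontier V)
    (U : Pt n → ℝ)
    (hU2 : ContDiffOn ℝ 2 U V) (hU1 : ContDiffOn ℝ 1 U (closure V))
    (c₁ : Pt n → ℝ) (hc₁ : ∃ M : ℝ, ∀ z ∈ V, |c₁ z| ≤ M)
    (hineq : ∀ z ∈ V, c₁ z * U z ≤ -Lop U z)
    (hpos : ∀ z ∈ V, U P₀ < U z) (hP₀0 : U P₀ = 0) :
    ∃ L < (0 : ℝ),
      Tendsto (fun s : ℝ => (U P₀ - U (P₀ - s • outerNormal z₀ P₀)) / s)
        (𝓝[>] 0) (𝓝 L) := by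
  classical
  obtain ⟨M₀, hM₀⟩ := hc₁
  set M : ℝ := max M₀ 0 with hMdef
  have hM0 : (0:ℝ) ≤ M := le_max_right _ _
  have hMb : ∀ p ∈ V, |c₁ p| ≤ M := fun p hp => le_trans (hM₀ p hp) (le_max_left _ _)
  set κ : ℝ := Real.sqrt (M + 1) with hκdef
  obtain ⟨α, hα, hαcond⟩ := HopfAux.alpha_exists z₀ R κ hR
  set K : ℝ := Real.exp (-(α * R ^ 4)) with hKdef
  -- facts about the gauge ball
  have hball' : {p : Pt n | HopfAux.FF z₀ p < R ^ 4} ⊆ V := by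
    rw [← HopfAux.gBall_eq z₀ R hR]; exact hball
  have hFFP : HopfAux.FF z₀ P₀ = R ^ 4 := HopfAux.frontier_FF hR hP₀
  have hsub_cl : {p : Pt n | HopfAux.FF z₀ p ≤ R ^ 4} ⊆ closure V :=
    subset_trans (HopfAux.le_subset_closure_lt z₀ R hR) (closure_mono hball')
  have hP₀cl : P₀ ∈ closure V := hsub_cl (le_of_eq hFFP)
  -- continuity and nonnegativity of U
  have hUcont : ContinuousOn U (closure V) := hU1.continuousOn
  have hU0 : ∀ p ∈ closure V, 0 ≤ U p := by
    intro p hp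
    have h1 : (𝓝[V] p).NeBot := mem_closure_iff_nhdsWithin_neBot.1 hp
    have h2 : Tendsto U (𝓝[V] p) (𝓝 (U p)) :=
      (hUcont p hp).mono_left (nhdsWithin_mono p subset_closure)
    refine ge_of_tendsto h2 ?_
    filter_upwards [self_mem_nhdsWithin] with q hq
    have := hpos q hq
    linarith
  -- the differential inequality with constant `M`
  have hineqM : ∀ p ∈ V, Lop U p ≤ M * U p := by
    intro p hp
    have h1 := hineq p hp
    have h2 := abs_le.1 (hMb p hp)
    have h3 : 0 ≤ U p := by have := hpos p hp; linarith
    nlinarith [mul_le_mul_of_nonneg_right (show -c₁ p ≤ M by linarith [h2.1]) h3]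
  -- the positive minimum of U on the inner ball
  have hKinComp : IsCompact {p : Pt n | HopfAux.FF z₀ p ≤ (R/2)^4} :=
    HopfAux.isCompact_FF_le z₀ _ (by positivity)
  have hhalf : ((R:ℝ)/2)^4 < R^4 := by
    have := pow_pos hR 4
    nlinarith
  have hKinV : {p : Pt n | HopfAux.FF z₀ p ≤ (R/2)^4} ⊆ V := by
    intro p hp
    exact hball' (show HopfAux.FF z₀ p < R ^ 4 from lt_of_le_of_lt hp hhalf)
  have hKinNe : ({p : Pt n | HopfAux.FF z₀ p ≤ (R/2)^4}).Nonempty := by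
    refine ⟨z₀, ?_⟩
    show HopfAux.FF z₀ z₀ ≤ (R/2)^4
    rw [HopfAux.FF_self]
    positivity
  obtain ⟨zmin, hzmin, hminU⟩ := hKinComp.exists_isMinOn hKinNe
    (hUcont.mono (subset_trans hKinV subset_closure))
  set m : ℝ := U zmin with hm
  have hmpos : 0 < m := by
    have := hpos zmin (hKinV hzmin)
    rw [hm]; linarith
  set Hb : ℝ := Real.cosh (κ * R) with hHb
  have hHb1 : (1:ℝ) ≤ Hb := Real.one_le_cosh _
  have hHbpos : 0 < Hb := by linarith
  have hκnn : 0 ≤ κ := Real.sqrt_nonneg _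
  have hbarHb : ∀ p : Pt n, HopfAux.FF z₀ p ≤ R ^ 4 → HopfAux.bar z₀ κ α K p ≤ Hb := by
    intro p hp
    have hl2 : (p.2.2.2 - z₀.2.2.2)^2 ≤ R^2 :=
      le_trans (HopfAux.lsq_le_SS z₀ p) (HopfAux.SS_le_sq hR hp)
    have habs : |p.2.2.2 - z₀.2.2.2| ≤ R := by
      have h4 := HopfAux.abs_le_of_sq_le hl2
      rwa [Real.sqrt_sq hR.le] at h4
    have hchpos : 0 < Real.cosh (κ * (p.2.2.2 - z₀.2.2.2)) := Real.cosh_pos _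
    have hch : Real.cosh (κ * (p.2.2.2 - z₀.2.2.2)) ≤ Hb := by
      rw [hHb]
      apply Real.cosh_le_cosh.2
      rw [abs_mul, abs_mul, abs_of_nonneg hκnn, abs_of_nonneg hR.le]
      exact mul_le_mul_of_nonneg_left habs hκnn
    have hE1 : Real.exp (-(α * HopfAux.FF z₀ p)) ≤ 1 := by
      rw [Real.exp_le_one_iff]
      have := HopfAux.FF_nonneg z₀ p
      nlinarith
    have hKpos : 0 < K := Real.exp_pos _
    show Real.cosh (κ * (p.2.2.2 - z₀.2.2.2)) * (Real.exp (-(α * HopfAux.FF z₀ p)) - K) ≤ Hb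
    have t1 : Real.cosh (κ * (p.2.2.2 - z₀.2.2.2)) * (Real.exp (-(α * HopfAux.FF z₀ p)) - K)
        ≤ Real.cosh (κ * (p.2.2.2 - z₀.2.2.2)) * 1 :=
      mul_le_mul_of_nonneg_left (by linarith) hchpos.le
    linarith
  set ε : ℝ := m / Hb with hεdef
  have hεpos : 0 < ε := div_pos hmpos hHbpos
  have hbound : ∀ p : Pt n, HopfAux.FF z₀ p = (R/2)^4 → ε * HopfAux.bar z₀ κ α K p ≤ U p := by
    intro p hp
    have hpK : p ∈ {q : Pt n | HopfAux.FF z₀ q ≤ (R/2)^4} := le_of_eq hp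
    have hUm : m ≤ U p := hminU hpK
    have hFFle : HopfAux.FF z₀ p ≤ R^4 := by rw [hp]; exact hhalf.le
    have h1 : ε * HopfAux.bar z₀ κ α K p ≤ ε * Hb :=
      mul_le_mul_of_nonneg_left (hbarHb p hFFle) hεpos.le
    have h2 : ε * Hb = m := div_mul_cancel₀ m (ne_of_gt hHbpos)
    linarith
  have hcompare := HopfAux.comparison V hVopen U hU2 hUcont hU0 z₀ R M κ α K ε hR hM0 hεpos.le
    hball' hsub_cl hineqM hκdef hα hαcond hKdef hbound
  -- the outward normal direction
  set ν : Pt n := outerNormal z₀ P₀ with hν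
  set dot : ℝ := dotP (egrad (gaugeQuartic z₀) P₀) (egrad (gaugeQuartic z₀) P₀) with hdotdef
  have hdotpos : 0 < dot := HopfAux.dot_grad_pos z₀ P₀ hR hFFP
  set en : ℝ := enormP (egrad (gaugeQuartic z₀) P₀) with hendef
  have henpos : 0 < en := Real.sqrt_pos.2 hdotpos
  have hen2 : en * en = dot := Real.mul_self_sqrt hdotpos.le
  have hFFdiff : DifferentiableAt ℝ (HopfAux.FF z₀) P₀ :=
    ((HopfAux.contDiff_FF z₀).differentiable two_ne_zero).differentiableAt
  have hlinFF : ∀ v : Pt n, fderiv ℝ (HopfAux.FF z₀) P₀ v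
      = dotP (egrad (gaugeQuartic z₀) P₀) v := by
    intro v
    rw [HopfAux.fderiv_FF_apply, HopfAux.dotP_grad]
  have hFFν : fderiv ℝ (HopfAux.FF z₀) P₀ ν = en := by
    rw [hν]
    show fderiv ℝ (HopfAux.FF z₀) P₀
      ((enormP (egrad (gaugeQuartic z₀) P₀))⁻¹ • egrad (gaugeQuartic z₀) P₀) = en
    rw [_root_.map_smul, smul_eq_mul, hlinFF, ← hdotdef, ← hendef, ← hen2,
      inv_mul_cancel_left₀ (ne_of_gt henpos)]
  have hFFnν : fderiv ℝ (HopfAux.FF z₀) P₀ (-ν) = -en := by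
    rw [map_neg, hFFν]
  have hdFF : HasFDerivWithinAt (HopfAux.FF z₀) (fderiv ℝ (HopfAux.FF z₀) P₀) Set.univ P₀ :=
    hFFdiff.hasFDerivAt.hasFDerivWithinAt
  have hqFF : Tendsto (fun s : ℝ => (HopfAux.FF z₀ (P₀ + s • (-ν)) - HopfAux.FF z₀ P₀) / s)
      (𝓝[>] (0:ℝ)) (𝓝 (-en)) := by
    have h5 := HopfAux.quot_tendsto (wv := -ν) hdFF
      (Filter.Eventually.of_forall fun s => Set.mem_univ _)
    rwa [hFFnν] at h5
  have hup : ∀ᶠ s in 𝓝[>] (0:ℝ), HopfAux.FF z₀ (P₀ + s • (-ν)) < R ^ 4 := by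
    have hev : ∀ᶠ s in 𝓝[>] (0:ℝ),
        (HopfAux.FF z₀ (P₀ + s • (-ν)) - HopfAux.FF z₀ P₀) / s < -en/2 :=
      hqFF.eventually_lt_const (by linarith)
    filter_upwards [hev, self_mem_nhdsWithin] with s hs hs0
    have hs0' : (0:ℝ) < s := hs0
    have h6 : (HopfAux.FF z₀ (P₀ + s • (-ν)) - HopfAux.FF z₀ P₀) / s < 0 :=
      lt_trans hs (by linarith)
    have h7 : HopfAux.FF z₀ (P₀ + s • (-ν)) - HopfAux.FF z₀ P₀ < 0 := by
      have h8 := mul_neg_of_neg_of_pos h6 hs0'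
      rwa [div_mul_cancel₀ _ (ne_of_gt hs0')] at h8
    rw [hFFP] at h7
    linarith
  have hlow : ∀ᶠ s in 𝓝[>] (0:ℝ), (R/2)^4 < HopfAux.FF z₀ (P₀ + s • (-ν)) := by
    have hc : Continuous (fun s : ℝ => HopfAux.FF z₀ (P₀ + s • (-ν))) := by
      apply (HopfAux.continuous_FF z₀).comp
      fun_prop
    have h0 := hc.tendsto 0
    simp only [zero_smul, add_zero] at h0
    have hcontc : Tendsto (fun s : ℝ => HopfAux.FF z₀ (P₀ + s • (-ν))) (𝓝[>] (0:ℝ))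
        (𝓝 (R ^ 4)) := by
      rw [← hFFP]
      exact h0.mono_left nhdsWithin_le_nhds
    exact hcontc.eventually_const_lt hhalf
  have hUineq : ∀ᶠ s in 𝓝[>] (0:ℝ),
      ε * HopfAux.bar z₀ κ α K (P₀ + s • (-ν)) ≤ U (P₀ + s • (-ν)) := by
    filter_upwards [hup, hlow] with s h1 h2
    exact hcompare _ h2.le h1.le
  have hmemV : ∀ᶠ s in 𝓝[>] (0:ℝ), P₀ + s • (-ν) ∈ closure V := by
    filter_upwards [hup] with s h1
    exact subset_closure (hball' h1)
  have hdW : HasFDerivWithinAt U (fderivWithin ℝ U (closure V) P₀) (closure V) P₀ :=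
    ((hU1.differentiableOn one_ne_zero) P₀ hP₀cl).hasFDerivWithinAt
  have hqU := HopfAux.quot_tendsto (wv := -ν) hdW hmemV
  have hbardiff : DifferentiableAt ℝ (HopfAux.bar z₀ κ α K) P₀ :=
    ((HopfAux.contDiff_bar z₀ κ α K).differentiable two_ne_zero).differentiableAt
  have hqB := HopfAux.quot_tendsto (wv := -ν) hbardiff.hasFDerivAt.hasFDerivWithinAt
    (Filter.Eventually.of_forall fun s => Set.mem_univ _)
  have hbarP₀ : HopfAux.bar z₀ κ α K P₀ = 0 := by
    show Real.cosh (κ * (P₀.2.2.2 - z₀.2.2.2))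
        * (Real.exp (-(α * HopfAux.FF z₀ P₀)) - K) = 0
    rw [hFFP, hKdef, sub_self, mul_zero]
  have hDb : fderiv ℝ (HopfAux.bar z₀ κ α K) P₀ (-ν)
      = Real.cosh (κ * (P₀.2.2.2 - z₀.2.2.2)) * (K * (α * en)) := by
    rw [HopfAux.fderiv_bar_apply]
    have h1 : Real.exp (-(α * HopfAux.FF z₀ P₀)) - K = 0 := by
      rw [hFFP, hKdef, sub_self]
    have h2 : 2 * HopfAux.SS z₀ P₀ * HopfAux.aS z₀ P₀ (-ν)
        + 2 * HopfAux.TT z₀ P₀ * HopfAux.aT z₀ (-ν) = -en := by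
      rw [← HopfAux.fderiv_FF_apply]
      exact hFFnν
    rw [h1, h2, hFFP, ← hKdef]
    ring
  have hDbpos : 0 < fderiv ℝ (HopfAux.bar z₀ κ α K) P₀ (-ν) := by
    rw [hDb, hKdef]
    exact mul_pos (Real.cosh_pos _) (mul_pos (Real.exp_pos _) (mul_pos hα henpos))
  have hfun : (fun s : ℝ => (U P₀ - U (P₀ - s • ν)) / s)
      = fun s : ℝ => -((U (P₀ + s • (-ν)) - U P₀) / s) := by
    funext s
    rw [show P₀ + s • (-ν) = P₀ - s • ν by rw [smul_neg]; abel]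
    ring
  refine ⟨-(fderivWithin ℝ U (closure V) P₀ (-ν)), ?_, ?_⟩
  · -- strict negativity of the limit
    have hT1 : Tendsto (fun s : ℝ => -((U (P₀ + s • (-ν)) - U P₀) / s)) (𝓝[>] (0:ℝ))
        (𝓝 (-(fderivWithin ℝ U (closure V) P₀ (-ν)))) := hqU.neg
    have hT2 : Tendsto (fun s : ℝ =>
        ε * (-((HopfAux.bar z₀ κ α K (P₀ + s • (-ν)) - HopfAux.bar z₀ κ α K P₀) / s)))
        (𝓝[>] (0:ℝ))
        (𝓝 (ε * (-(fderiv ℝ (HopfAux.bar z₀ κ α K) P₀ (-ν))))) := (hqB.neg).const_mul ε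
    have hle : ∀ᶠ s in 𝓝[>] (0:ℝ), -((U (P₀ + s • (-ν)) - U P₀) / s)
        ≤ ε * (-((HopfAux.bar z₀ κ α K (P₀ + s • (-ν)) - HopfAux.bar z₀ κ α K P₀) / s)) := by
      filter_upwards [hUineq, self_mem_nhdsWithin] with s h1 hs0
      have hs0' : (0:ℝ) < s := hs0
      have hd : ε * HopfAux.bar z₀ κ α K (P₀ + s • (-ν)) * s⁻¹ ≤ U (P₀ + s • (-ν)) * s⁻¹ :=
        mul_le_mul_of_nonneg_right h1 (inv_nonneg.2 hs0'.le)
      rw [hbarP₀, hP₀0]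
      calc -((U (P₀ + s • (-ν)) - 0) / s) = -(U (P₀ + s • (-ν)) * s⁻¹) := by ring
        _ ≤ -(ε * HopfAux.bar z₀ κ α K (P₀ + s • (-ν)) * s⁻¹) := by linarith
        _ = ε * (-((HopfAux.bar z₀ κ α K (P₀ + s • (-ν)) - 0) / s)) := by ring
    have hfinal : -(fderivWithin ℝ U (closure V) P₀ (-ν))
        ≤ ε * (-(fderiv ℝ (HopfAux.bar z₀ κ α K) P₀ (-ν))) :=
      le_of_tendsto_of_tendsto hT1 hT2 hle
    have hneg : ε * (-(fderiv ℝ (HopfAux.bar z₀ κ α K) P₀ (-ν))) < 0 :=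
      mul_neg_of_pos_of_neg hεpos (by linarith)
    linarith
  · rw [hfun]
    exact hqU.neg
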